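/- arXiv:1512.02973 — 6 statements merged into one kernel-verified Lean document; each statement's English description precedes it below -/
import Mathlib

section
/- For all integers n ≥ 1 and 0 ≤ m ≤ n−1, g_n(m,m+1) = C(n−1,m); that is, the smallest k for which there exists a cutset in 2^{[n]} consisting of exactly k subsets of size m and exactly k subsets of size m+1 (and no subsets of any other size) is C(n−1,m). -/
/-!
Upper bound: the `m`-subsets of `[n - 1]`, together with the sets obtained from them by adding
`n`, form a cutset, since a maximal chain either avoids `n` up to level `m` or contains `n` from
level `m + 1` on.

Lower bound: a maximal chain passing through an `m`-set `X` outside the cutset must meet it at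
its next set `X ∪ {y}`, and every `y ∉ X` occurs this way. So the `(m + 1)`-sets of the cutset
contain the upper shadow of the `m`-sets it misses. With `k < C(n-1, m)` sets of size `m`, it
misses at least `C(n, m) - k > C(n-1, m-1)` of them, and Kruskal–Katona in Lovász's form,
applied to their complements, bounds that upper shadow below by `C(n-1, m) > k`.
-/

open Finset

/-- A maximal chain in the Boolean lattice of subsets of `[n] = {1, …, n}`:
`∅ = c 0 ⊂ c 1 ⊂ ⋯ ⊂ c n = [n]` with `|c i| = i`. -/
def IsMaxChainIn (n : ℕ) (c : ℕ → Finset ℕ) : Prop :=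
  (∀ i ≤ n, (c i).card = i) ∧ (∀ i < n, c i ⊆ c (i + 1)) ∧ c n = Finset.Icc 1 n

/-- A cutset in `2^{[n]}`: a collection of subsets of `[n]` meeting every maximal chain. -/
def IsCutsetIn (n : ℕ) (C : Finset (Finset ℕ)) : Prop :=
  (∀ A ∈ C, A ⊆ Finset.Icc 1 n) ∧
    ∀ c : ℕ → Finset ℕ, IsMaxChainIn n c → ∃ i ≤ n, c i ∈ C

/-- `gcut n m l`: the smallest `k` such that there is a cutset in `2^{[n]}` containing
exactly `k` subsets of size `i` for each `m ≤ i ≤ l` and no subsets of any other size. -/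
noncomputable def gcut (n m l : ℕ) : ℕ :=
  sInf {k : ℕ | ∃ C : Finset (Finset ℕ), IsCutsetIn n C ∧
    (∀ A ∈ C, m ≤ A.card ∧ A.card ≤ l) ∧
    ∀ i : ℕ, m ≤ i → i ≤ l → (C.filter fun A => A.card = i).card = k}

open scoped FinsetFamily

namespace Finset

theorem choose_le_card_upShadow {n m : ℕ} {𝒜 : Finset (Finset (Fin n))}
    (h𝒜 : (𝒜 : Set (Finset (Fin n))).Sized (m + 1)) (hcard : (n - 1).choose m ≤ #𝒜) :
    (n - 1).choose (m + 1) ≤ #(∂⁺ 𝒜) := by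
  rcases le_or_gt n (m + 1) with hnm | hmn
  · simp [Nat.choose_eq_zero_of_lt (by omega : n - 1 < m + 1)]
  have hcompl : (𝒜ᶜˢ : Set (Finset (Fin n))).Sized (n - (m + 1)) := by simpa using h𝒜.compls
  have kk := kruskal_katona_lovasz_form (i := 1) (𝒜 := 𝒜ᶜˢ) (by omega) (by omega)
    (Nat.sub_le n 1) hcompl
    (by rwa [card_compls, Nat.choose_symm_of_eq_add (by omega : n - 1 = n - (m + 1) + m)])
  rwa [Function.iterate_one, shadow_compls, card_compls,
    Nat.choose_symm_of_eq_add (by omega : n - 1 = n - (m + 1) - 1 + (m + 1))] at kk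

end Finset

theorem List.exists_nodup_append_toFinset_eq {α : Type*} [DecidableEq α] {L : List α}
    {T : Finset α} (hL : L.Nodup) (hLT : L.toFinset ⊆ T) :
    ∃ M, (L ++ M).Nodup ∧ (L ++ M).toFinset = T :=
  ⟨(T \ L.toFinset).toList,
    hL.append (nodup_toList _) fun a ha hb => by simp_all,
    by simp [union_sdiff_of_subset hLT]⟩

namespace IsMaxChainIn

variable {n : ℕ} {c : ℕ → Finset ℕ}

theorem mono (hc : IsMaxChainIn n c) {i j : ℕ} (hij : i ≤ j) (hjn : j ≤ n) : c i ⊆ c j := by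
  induction j, hij using Nat.le_induction with
  | base => exact Subset.rfl
  | succ j hij ih => exact (ih (by omega)).trans (hc.2.1 j (by omega))

theorem subset_Icc (hc : IsMaxChainIn n c) {i : ℕ} (hin : i ≤ n) : c i ⊆ Icc 1 n :=
  hc.2.2 ▸ hc.mono hin le_rfl

end IsMaxChainIn

theorem isMaxChainIn_take {n : ℕ} {l : List ℕ} (hl : l.Nodup) (hln : l.toFinset = Icc 1 n) :
    IsMaxChainIn n fun i => (l.take i).toFinset := by
  have hlen : l.length = n := by
    rw [← List.toFinset_card_of_nodup hl, hln, Nat.card_Icc, Nat.add_sub_cancel]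
  refine ⟨fun i hi => ?_, fun i _ x hx => ?_, ?_⟩
  · rw [List.toFinset_card_of_nodup (hl.sublist (List.take_sublist _ _)), List.length_take,
      hlen, min_eq_left hi]
  · simp only [List.mem_toFinset] at hx ⊢
    exact (List.take_sublist_take_left (Nat.le_succ i)).subset hx
  · simp only [List.take_of_length_le hlen.le, hln]

theorem exists_isMaxChainIn_through {n : ℕ} {X Y : Finset ℕ} (hXY : X ⊆ Y)
    (hY : Y ⊆ Icc 1 n) : ∃ c, IsMaxChainIn n c ∧ c #X = X ∧ c #Y = Y := by
  obtain ⟨M₁, hnd₁, hM₁⟩ :=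
    List.exists_nodup_append_toFinset_eq (nodup_toList X) (by simpa using hXY)
  obtain ⟨M₂, hnd₂, hM₂⟩ := List.exists_nodup_append_toFinset_eq hnd₁ (hM₁ ▸ hY)
  refine ⟨_, isMaxChainIn_take hnd₂ hM₂, ?_, ?_⟩
  · rw [List.append_assoc, List.take_left' (length_toList X), toList_toFinset]
  · rw [List.take_left' (by rw [← List.toFinset_card_of_nodup hnd₁, hM₁]), hM₁]

namespace IsCutsetIn

variable {n m : ℕ} {C : Finset (Finset ℕ)}

theorem mem_or_insert_mem (hC : IsCutsetIn n C) (hsize : ∀ A ∈ C, m ≤ #A ∧ #A ≤ m + 1)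
    {X : Finset ℕ} {y : ℕ} (hX : X ⊆ Icc 1 n) (hXm : #X = m) (hy : y ∈ Icc 1 n)
    (hyX : y ∉ X) : X ∈ C ∨ insert y X ∈ C := by
  obtain ⟨c, hc, hcX, hcY⟩ :=
    exists_isMaxChainIn_through (subset_insert y X) (insert_subset hy hX)
  obtain ⟨i, hin, hci⟩ := hC.2 c hc
  have hi := hsize _ hci
  rw [hc.1 i hin] at hi
  rw [hXm] at hcX
  rw [card_insert_of_notMem hyX, hXm] at hcY
  rcases (by omega : i = m ∨ i = m + 1) with rfl | rfl
  · exact Or.inl (hcX ▸ hci)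
  · exact Or.inr (hcY ▸ hci)

theorem nonempty (hC : IsCutsetIn n C) : C.Nonempty := by
  obtain ⟨i, -, hi⟩ :=
    hC.2 (fun i => Icc 1 i) ⟨fun i _ => by simp, fun i _ => Icc_subset_Icc_right (by omega), rfl⟩
  exact ⟨_, hi⟩

theorem choose_succ_le_card (hC : IsCutsetIn (n + 1) C)
    (hsize : ∀ A ∈ C, m + 1 ≤ #A ∧ #A ≤ m + 2) {k : ℕ}
    (hcount : ∀ i, m + 1 ≤ i → i ≤ m + 2 → #{A ∈ C | #A = i} = k) :
    n.choose (m + 1) ≤ k := by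
  by_contra! hk
  -- Kruskal–Katona is stated over `Fin`; `e` identifies `Fin (n + 1)` with `[n + 1]`.
  set e : Fin (n + 1) ↪ ℕ := Fin.valEmbedding.trans (addRightEmbedding 1)
  have hmapIcc (X : Finset (Fin (n + 1))) : X.map e ⊆ Icc 1 (n + 1) := fun x hx => by
    obtain ⟨j, -, rfl⟩ := mem_map.1 hx
    exact mem_Icc.2 ⟨Nat.le_add_left 1 j, j.isLt⟩
  set 𝒳 : Finset (Finset (Fin (n + 1))) := {X ∈ powersetCard (m + 1) univ | X.map e ∉ C}
    with h𝒳
  have hcard𝒳 : n.choose m ≤ #𝒳 := by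
    have hhit : #{X ∈ powersetCard (m + 1) univ | X.map e ∈ C} ≤ k := by
      rw [← hcount (m + 1) le_rfl (by omega)]
      refine card_le_card_of_injOn (map e) (fun X hX => ?_) (map_injective e).injOn
      simp only [coe_filter, mem_powersetCard] at hX
      simp [hX.2, hX.1.2]
    have := card_filter_add_card_filter_not (s := powersetCard (m + 1) univ)
      (fun X : Finset (Fin (n + 1)) => X.map e ∈ C)
    rw [← h𝒳, card_powersetCard, card_univ, Fintype.card_fin, Nat.choose_succ_succ'] at this
    omega
  have hshadow : #(∂⁺ 𝒳) ≤ k := by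
    rw [← hcount (m + 2) (by omega) le_rfl]
    refine card_le_card_of_injOn (map e) (fun Y hY => ?_) (map_injective e).injOn
    obtain ⟨X, hX, j, hjX, rfl⟩ := mem_upShadow_iff.1 hY
    simp only [h𝒳, mem_filter, mem_powersetCard] at hX
    have hXm : #(X.map e) = m + 1 := by simp [hX.1.2]
    have hjX' : e j ∉ X.map e := by simpa using hjX
    have hins := (hC.mem_or_insert_mem hsize (hmapIcc X) hXm (hmapIcc {j} (by simp)) hjX')
      |>.resolve_left hX.2
    simp [map_insert, hins, card_insert_of_notMem hjX', hXm]
  have hsized : (𝒳 : Set (Finset (Fin (n + 1)))).Sized (m + 1) := fun X hX => by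
    simp only [h𝒳, coe_filter, mem_powersetCard] at hX
    exact hX.1.2
  have := choose_le_card_upShadow hsized (by simpa using hcard𝒳)
  simp only [Nat.add_sub_cancel] at this
  omega

theorem choose_le_card (hC : IsCutsetIn n C) (hsize : ∀ A ∈ C, m ≤ #A ∧ #A ≤ m + 1) {k : ℕ}
    (hcount : ∀ i, m ≤ i → i ≤ m + 1 → #{A ∈ C | #A = i} = k) : (n - 1).choose m ≤ k := by
  rcases m with _ | m
  · obtain ⟨A, hA⟩ := hC.nonempty
    rw [Nat.choose_zero_right, ← hcount #A (hsize A hA).1 (hsize A hA).2]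
    exact card_pos.2 ⟨A, mem_filter.2 ⟨hA, rfl⟩⟩
  rcases n with _ | n
  · simp
  exact choose_succ_le_card hC hsize hcount

end IsCutsetIn

theorem isCutsetIn_powersetCard_union_image_insert {n m : ℕ} (hmn : m ≤ n) :
    IsCutsetIn (n + 1)
      (powersetCard m (Icc 1 n) ∪ (powersetCard m (Icc 1 n)).image (insert (n + 1))) := by
  have hIcc : Icc 1 (n + 1) = insert (n + 1) (Icc 1 n) :=
    (insert_Icc_right_eq_Icc_add_one (by omega)).symm
  refine ⟨fun A hA => ?_, fun c hc => ?_⟩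
  · obtain hA | ⟨B, hB, rfl⟩ := mem_union.1 hA |>.imp_right mem_image.1
    · exact (mem_powersetCard.1 hA).1.trans (hIcc ▸ subset_insert _ _)
    · exact hIcc ▸ insert_subset_insert _ (mem_powersetCard.1 hB).1
  by_cases hnc : n + 1 ∈ c m
  · have hnc' : n + 1 ∈ c (m + 1) := hc.mono (Nat.le_succ m) (by omega) hnc
    refine ⟨m + 1, by omega, mem_union_right _ (mem_image.2 ⟨_, ?_, insert_erase hnc'⟩)⟩
    refine mem_powersetCard.2 ⟨subset_insert_iff.1 (hIcc ▸ hc.subset_Icc (by omega)), ?_⟩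
    rw [card_erase_of_mem hnc', hc.1 _ (by omega), Nat.add_sub_cancel]
  · refine ⟨m, by omega, mem_union_left _ (mem_powersetCard.2 ⟨?_, hc.1 m (by omega)⟩)⟩
    exact (subset_insert_iff_of_notMem hnc).1 (hIcc ▸ hc.subset_Icc (by omega))

theorem exists_isCutsetIn_card_filter_eq_choose {n m : ℕ} (hmn : m ≤ n) :
    ∃ C : Finset (Finset ℕ), IsCutsetIn (n + 1) C ∧ (∀ A ∈ C, m ≤ #A ∧ #A ≤ m + 1) ∧
      ∀ i, m ≤ i → i ≤ m + 1 → #{A ∈ C | #A = i} = n.choose m := by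
  set P := powersetCard m (Icc 1 n)
  have hPcard : ∀ A ∈ P, #A = m := fun A hA => (mem_powersetCard.1 hA).2
  have hPnotMem : ∀ A ∈ P, n + 1 ∉ A := fun A hA h => by
    simpa using (mem_powersetCard.1 hA).1 h
  have hQcard : ∀ A ∈ P.image (insert (n + 1)), #A = m + 1 := by
    simp only [mem_image, forall_exists_index, and_imp, forall_apply_eq_imp_iff₂]
    exact fun A hA => by rw [card_insert_of_notMem (hPnotMem A hA), hPcard A hA]
  refine ⟨_, isCutsetIn_powersetCard_union_image_insert hmn, fun A hA => ?_, fun i hmi him => ?_⟩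
  · obtain hA | hA := mem_union.1 hA
    · simp [hPcard A hA]
    · simp [hQcard A hA]
  rw [filter_union]
  rcases (by omega : i = m ∨ i = m + 1) with rfl | rfl
  · rw [filter_true_of_mem hPcard, filter_false_of_mem (fun A hA => by simp [hQcard A hA]),
      union_empty, card_powersetCard, Nat.card_Icc, Nat.add_sub_cancel]
  · rw [filter_false_of_mem (fun A hA => by simp [hPcard A hA]), filter_true_of_mem hQcard,
      empty_union, card_image_of_injOn, card_powersetCard, Nat.card_Icc, Nat.add_sub_cancel]
    intro A hA B hB hAB
    rw [← erase_insert (hPnotMem A hA), ← erase_insert (hPnotMem B hB)]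
    exact congrArg (erase · (n + 1)) hAB

/-- For all integers `n ≥ 1` and `0 ≤ m ≤ n-1`, `g_n(m,m+1) = C(n-1,m)`. -/
theorem gcut_succ (n m : ℕ) (hn : 1 ≤ n) (hmn : m ≤ n - 1) :
    gcut n m (m + 1) = (n - 1).choose m := by
  obtain ⟨n, rfl⟩ : ∃ n', n = n' + 1 := ⟨n - 1, by omega⟩
  obtain ⟨C, hC⟩ := exists_isCutsetIn_card_filter_eq_choose (by omega : m ≤ n)
  refine le_antisymm (Nat.sInf_le ⟨C, hC⟩) (le_csInf ⟨_, C, hC⟩ ?_)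
  rintro k ⟨C, hcut, hsize, hcount⟩
  exact hcut.choose_le_card hsize hcount
end

section
/- For all integers n ≥ 2 and 0 ≤ m ≤ n/2 − 1, g_n(m,m+2) = Σ_{j=0}^{m} C(n−2j−2, m−j); that is, the smallest k for which there exists a cutset in 2^{[n]} consisting of exactly k subsets of each of the sizes m, m+1 and m+2 (and no subsets of any other size) equals Σ_{j=0}^{m} C(n−2j−2, m−j). -/
/-!
A collection confined to the levels `m, m+1, m+2` is a cutset iff every `(m+1)`-set outside it
has all its `m`-subsets or all its `(m+2)`-supersets inside it: otherwise a maximal chain through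
a missing flag `A ⊂ B ⊂ D` avoids it. With `k` members per level, the `(m+1)`-sets outside the
collection are therefore covered by a family `W` whose shadow, and a family `U` whose upper
shadow, has at most `k` members; Kruskal–Katona (applied to `W` and to the complements of the
sets in `U`) bounds both by sizes of colex initial segments. On the ground set `{0, …, n-1}` and
with `T_j = {n-2, n-4, …, n-2j}`, these segments are unions of blocks `T_j ∪ X` with
`X ⊆ {0, …, n-2j-3}`, of size `∑_j C(n-2j-2, q-j)`, and a Pascal-rule identity for `C(n, m+1)`
shows that `k < ∑_{j ≤ m} C(n-2j-2, m-j)` leaves too little room for `W` and `U`. The block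
families are closed under shadows, so taking them for level `m`, for `W`, and for the complements
of `U` and of level `m+2` yields a cutset attaining the bound.
-/

open Finset

open scoped FinsetFamily

lemma IsMaxChainIn.subset_Icc_s2 {n : ℕ} {c : ℕ → Finset ℕ} (hc : IsMaxChainIn n c) {i : ℕ}
    (hi : i ≤ n) : c i ⊆ Icc 1 n :=
  hc.2.2 ▸ Nat.decreasingInduction (motive := fun k _ => c k ⊆ c n)
    (fun k hk ih => (hc.2.1 k hk).trans ih) Subset.rfl hi

lemma isMaxChainIn_toFinset_take {n : ℕ} {L : List ℕ} (hL : L.Nodup)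
    (hLn : L.toFinset = Icc 1 n) : IsMaxChainIn n fun i => (L.take i).toFinset := by
  have hlen : L.length = n := by
    rw [← List.toFinset_card_of_nodup hL, hLn, Nat.card_Icc, Nat.add_sub_cancel]
  refine ⟨fun i hi => ?_, fun i _ => ?_, ?_⟩
  · rw [List.toFinset_card_of_nodup (hL.sublist (List.take_sublist _ _)), List.length_take]
    omega
  · intro x
    simpa only [List.mem_toFinset] using
      fun h => (List.take_prefix_take_left (l := L) i.le_succ).subset h
  · simp only [List.take_of_length_le hlen.le, hLn]

lemma exists_isMaxChainIn_flag {n : ℕ} {A B D : Finset ℕ} (hAB : A ⊆ B) (hBD : B ⊆ D)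
    (hD : D ⊆ Icc 1 n) : ∃ c, IsMaxChainIn n c ∧ c #A = A ∧ c #B = B ∧ c #D = D := by
  have hA := card_le_card hAB
  have hB := card_le_card hBD
  set L := A.toList ++ (B \ A).toList ++ (D \ B).toList ++ (Icc 1 n \ D).toList
  have hfin : L.toFinset = Icc 1 n := by
    simp only [L, List.toFinset_append, toList_toFinset, union_sdiff_of_subset hAB,
      union_sdiff_of_subset hBD, union_sdiff_of_subset hD]
  have hlen : L.length = #(Icc 1 n) := by
    simp only [L, List.length_append, length_toList, card_sdiff_of_subset hAB,
      card_sdiff_of_subset hBD, card_sdiff_of_subset hD]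
    have := card_le_card hD
    omega
  have hL : L.Nodup := List.dedup_eq_self.1 <|
    (List.dedup_sublist L).eq_of_length (by rw [← List.card_toFinset, hfin, hlen])
  have take_prefix {l : List ℕ} {S : Finset ℕ} (hl : l <+: L) (hS : l.toFinset = S) :
      (L.take #S).toFinset = S := by
    rw [← hS, List.toFinset_card_of_nodup (hL.sublist hl.sublist), ← List.prefix_iff_eq_take.1 hl]
  refine ⟨_, isMaxChainIn_toFinset_take hL hfin, take_prefix (l := A.toList) ?_ ?_,
    take_prefix (l := A.toList ++ (B \ A).toList) ?_ ?_,
    take_prefix (l := A.toList ++ (B \ A).toList ++ (D \ B).toList) ?_ ?_⟩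
  all_goals simp [L, ← union_assoc, union_sdiff_of_subset hAB, union_sdiff_of_subset hBD]

def IsLevelCut {α : Type*} (S : Finset α) (m : ℕ) (C : Finset (Finset α)) : Prop :=
  ∀ B ⊆ S, #B = m + 1 →
    B ∈ C ∨ (∀ A ⊆ B, #A = m → A ∈ C) ∨ ∀ D ⊆ S, B ⊆ D → #D = m + 2 → D ∈ C

lemma isCutsetIn_iff_isLevelCut {n m : ℕ} {C : Finset (Finset ℕ)} (hmn : m + 2 ≤ n)
    (hCn : ∀ A ∈ C, A ⊆ Icc 1 n) (hC : ∀ A ∈ C, m ≤ #A ∧ #A ≤ m + 2) :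
    IsCutsetIn n C ↔ IsLevelCut (Icc 1 n) m C := by
  constructor
  · intro hcut B hBn hB
    by_contra! h
    obtain ⟨hBC, ⟨A, hAB, hA, hAC⟩, D, hDn, hBD, hD, hDC⟩ := h
    obtain ⟨c, hc, hcA, hcB, hcD⟩ := exists_isMaxChainIn_flag hAB hBD hDn
    obtain ⟨i, hi, hciC⟩ := hcut.2 c hc
    have hci := hc.1 i hi
    have := hC _ hciC
    obtain h | h | h : i = m ∨ i = m + 1 ∨ i = m + 2 := by omega
    · rw [h, ← hA, hcA] at hciC; exact hAC hciC
    · rw [h, ← hB, hcB] at hciC; exact hBC hciC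
    · rw [h, ← hD, hcD] at hciC; exact hDC hciC
  · intro hcut
    refine ⟨hCn, fun c hc => ?_⟩
    have hc1 := hc.2.1 m (by omega)
    have hc2 := hc.2.1 (m + 1) (by omega)
    rcases hcut (c (m + 1)) (hc.subset_Icc_s2 (by omega)) (hc.1 _ (by omega)) with h | h | h
    · exact ⟨m + 1, by omega, h⟩
    · exact ⟨m, by omega, h _ hc1 (hc.1 m (by omega))⟩
    · exact ⟨m + 2, le_rfl.trans hmn, h _ (hc.subset_Icc_s2 hmn) hc2 (hc.1 _ hmn)⟩

lemma isLevelCut_image_map_iff {α β : Type*} [DecidableEq β] (f : α ↪ β) {S : Finset α}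
    {m : ℕ} {C : Finset (Finset α)} :
    IsLevelCut (S.map f) m (C.image (map f)) ↔ IsLevelCut S m C := by
  have hmem {A : Finset α} : A.map f ∈ C.image (map f) ↔ A ∈ C :=
    (map_injective f).mem_finset_image
  constructor
  · intro hcut B hBS hB
    rcases hcut (B.map f) (map_subset_map.2 hBS) (by rwa [card_map]) with h | h | h
    · exact .inl (hmem.1 h)
    · exact .inr <| .inl fun A hAB hA => hmem.1 <| h _ (map_subset_map.2 hAB) (by rwa [card_map])
    · exact .inr <| .inr fun D hDS hBD hD =>
        hmem.1 <| h _ (map_subset_map.2 hDS) (map_subset_map.2 hBD) (by rwa [card_map])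
  · intro hcut B' hBS hB
    obtain ⟨B, hBS', rfl⟩ := subset_map_iff.1 hBS
    rw [card_map] at hB
    rcases hcut B hBS' hB with h | h | h
    · exact .inl (hmem.2 h)
    · refine .inr <| .inl fun A' hAB hA => ?_
      obtain ⟨A, hAB', rfl⟩ := subset_map_iff.1 hAB
      exact hmem.2 (h A hAB' (by rwa [card_map] at hA))
    · refine .inr <| .inr fun D' hDS hBD hD => ?_
      obtain ⟨D, hDS', rfl⟩ := subset_map_iff.1 hDS
      rw [card_map] at hD
      exact hmem.2 (h D hDS' (map_subset_map.1 hBD) hD)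

section Stair

variable {n : ℕ}

/-- `stair n j = {n-2, n-4, …, n-2j}`. -/
def stair (n j : ℕ) : Finset (Fin n) := {x | ∃ i < j, (x : ℕ) + 2 * i + 2 = n}

def below (n c : ℕ) : Finset (Fin n) := {x | (x : ℕ) < c}

def stairBlock (n q j : ℕ) : Finset (Finset (Fin n)) :=
  {t | #t = q ∧ ∀ x : Fin n, n ≤ x + 2 * j + 2 → (x ∈ t ↔ x ∈ stair n j)}

/-- The `q`-sets `stair n j ∪ X` with `j < r` and `X ⊆ below n (n - 2j - 2)`. For `q = r + ℓ` these
are exactly the `q`-sets colex-smaller than `stair n r ∪ below n ℓ`. -/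
def stairFamily (n r q : ℕ) : Finset (Finset (Fin n)) := (range r).biUnion (stairBlock n q)

def stairSum (n r q : ℕ) : ℕ := ∑ j ∈ range r, (n - 2 * j - 2).choose (q - j)

@[simp] lemma mem_stair {j : ℕ} {x : Fin n} : x ∈ stair n j ↔ ∃ i < j, (x : ℕ) + 2 * i + 2 = n := by
  simp [stair]

@[simp] lemma mem_below {c : ℕ} {x : Fin n} : x ∈ below n c ↔ (x : ℕ) < c := by
  simp [below]

lemma mem_stairBlock {q j : ℕ} {t : Finset (Fin n)} :
    t ∈ stairBlock n q j ↔
      #t = q ∧ ∀ x : Fin n, n ≤ x + 2 * j + 2 → (x ∈ t ↔ ∃ i < j, (x : ℕ) + 2 * i + 2 = n) := by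
  simp [stairBlock]

lemma mem_stairFamily {r q : ℕ} {t : Finset (Fin n)} :
    t ∈ stairFamily n r q ↔ ∃ j < r, t ∈ stairBlock n q j := by
  simp [stairFamily]

lemma card_stair {j : ℕ} (h : 2 * j ≤ n) : #(stair n j) = j := by
  refine ((card_bij (fun i hi => ⟨n - 2 * i - 2, by rw [mem_range] at hi; omega⟩) (fun i hi => ?_)
    (fun i hi i' hi' hii' => ?_) (fun x hx => ?_)).symm.trans (card_range j))
  · simp only [mem_range] at hi
    simp only [mem_stair]
    exact ⟨i, hi, by omega⟩
  · simp only [mem_range, Fin.mk.injEq] at hi hi' hii'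
    omega
  · obtain ⟨i, hi, hx⟩ := mem_stair.1 hx
    exact ⟨i, mem_range.2 hi, Fin.ext (by dsimp only; omega)⟩

lemma stair_subset_of_mem_stairBlock {q j : ℕ} {t : Finset (Fin n)} (ht : t ∈ stairBlock n q j) :
    stair n j ⊆ t := fun x hx => by
  obtain ⟨i, hi, hx'⟩ := mem_stair.1 hx
  exact ((mem_stairBlock.1 ht).2 x (by omega)).2 ⟨i, hi, hx'⟩

lemma card_below {c : ℕ} (h : c ≤ n) : #(below n c) = c := by
  rw [below, Fin.card_filter_val_lt, min_eq_right h]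

lemma disjoint_stair_below {j c : ℕ} (h : c + 2 * j ≤ n) : Disjoint (stair n j) (below n c) :=
  disjoint_left.2 fun x hx hxc => by
    obtain ⟨i, hi, hx⟩ := mem_stair.1 hx
    have := mem_below.1 hxc
    omega

lemma stair_union_mem_stairBlock {q j : ℕ} (hjq : j ≤ q) (hjn : 2 * j ≤ n) {X : Finset (Fin n)}
    (hX : X ⊆ below n (n - 2 * j - 2)) (hXq : #X = q - j) : stair n j ∪ X ∈ stairBlock n q j := by
  refine mem_stairBlock.2 ⟨?_, fun x hx => ?_⟩
  · rw [card_union_of_disjoint ((disjoint_stair_below (by omega)).mono_right hX), card_stair hjn,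
      hXq]
    omega
  · have : x ∉ X := fun h => by have := mem_below.1 (hX h); omega
    simp [this]

lemma stair_union_inter_below {q j : ℕ} {t : Finset (Fin n)} (ht : t ∈ stairBlock n q j) :
    stair n j ∪ t ∩ below n (n - 2 * j - 2) = t := by
  ext x
  by_cases hx : n ≤ (x : ℕ) + 2 * j + 2
  · have : x ∉ below n (n - 2 * j - 2) := by rw [mem_below]; omega
    simp [this, (mem_stairBlock.1 ht).2 x hx]
  · have : x ∉ stair n j := fun h => by obtain ⟨i, hi, h⟩ := mem_stair.1 h; omega
    simp [this]
    omega

lemma card_stairBlock {q j : ℕ} (hjq : j ≤ q) (hjn : 2 * j ≤ n) :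
    #(stairBlock n q j) = (n - 2 * j - 2).choose (q - j) := by
  have hdisj := disjoint_stair_below (n := n) (j := j) (c := n - 2 * j - 2) (by omega)
  have himage : stairBlock n q j =
      (powersetCard (q - j) (below n (n - 2 * j - 2))).image (stair n j ∪ ·) := by
    ext t
    simp only [mem_image, mem_powersetCard]
    refine ⟨fun ht => ⟨_, ⟨inter_subset_right, ?_⟩, stair_union_inter_below ht⟩, ?_⟩
    · have := congrArg card (stair_union_inter_below ht)
      rw [card_union_of_disjoint (hdisj.mono_right inter_subset_right), card_stair hjn,
        (mem_stairBlock.1 ht).1] at this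
      omega
    · rintro ⟨X, ⟨hX, hXq⟩, rfl⟩
      exact stair_union_mem_stairBlock hjq hjn hX hXq
  rw [himage, card_image_of_injOn, card_powersetCard, card_below (by omega)]
  intro X hX Y hY hXY
  simp only [mem_coe, mem_powersetCard] at hX hY
  have hXY' := congrArg (· \ stair n j) hXY
  simpa [union_sdiff_cancel_left (hdisj.mono_right hX.1),
    union_sdiff_cancel_left (hdisj.mono_right hY.1)] using hXY'

lemma disjoint_stairBlock {q i j : ℕ} (hij : i < j) (hjn : 2 * j ≤ n) :
    Disjoint (stairBlock n q i) (stairBlock n q j) := by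
  refine disjoint_left.2 fun t hti htj => ?_
  have hw : (⟨n - 2 * i - 2, by omega⟩ : Fin n) ∈ t :=
    stair_subset_of_mem_stairBlock htj (mem_stair.2 ⟨i, hij, by dsimp only; omega⟩)
  obtain ⟨i', hi', h⟩ := ((mem_stairBlock.1 hti).2 _ (by dsimp only; omega)).1 hw
  dsimp only at h
  omega

lemma card_stairFamily {r q : ℕ} (hrq : r ≤ q + 1) (hrn : 2 * r ≤ n + 2) :
    #(stairFamily n r q) = stairSum n r q := by
  rw [stairFamily, card_biUnion]
  · refine sum_congr rfl fun j hj => ?_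
    rw [mem_range] at hj
    exact card_stairBlock (by omega) (by omega)
  · intro i hi j hj hij
    simp only [coe_range, Set.mem_Iio] at hi hj
    rcases hij.lt_or_gt with h | h
    · exact disjoint_stairBlock h (by omega)
    · exact (disjoint_stairBlock h (by omega)).symm

lemma stairFamily_mono {r r' q : ℕ} (h : r ≤ r') : stairFamily n r q ⊆ stairFamily n r' q :=
  biUnion_subset_biUnion_of_subset_left _ (range_subset_range.2 h)

lemma card_of_mem_stairFamily {r q : ℕ} {t : Finset (Fin n)} (ht : t ∈ stairFamily n r q) :
    #t = q := by
  obtain ⟨j, -, ht⟩ := mem_stairFamily.1 ht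
  exact (mem_stairBlock.1 ht).1

lemma notMem_of_mem_stairFamily {r q : ℕ} {t : Finset (Fin n)} (ht : t ∈ stairFamily n r q)
    {x : Fin n} (hx : (x : ℕ) + 1 = n) : x ∉ t := fun hxt => by
  obtain ⟨j, -, ht⟩ := mem_stairFamily.1 ht
  obtain ⟨i, -, h⟩ := ((mem_stairBlock.1 ht).2 x (by omega)).1 hxt
  omega

lemma shadow_stairFamily_subset {r q : ℕ} (hrn : 2 * r ≤ n + 2) :
    ∂ (stairFamily n r q) ⊆ stairFamily n (min r q) (q - 1) := by
  intro u hu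
  obtain ⟨t, ht, x, hx, rfl⟩ := mem_shadow_iff.1 hu
  obtain ⟨j, hj, htj⟩ := mem_stairFamily.1 ht
  obtain ⟨htq, htop⟩ := mem_stairBlock.1 htj
  have hcard : #(t.erase x) = q - 1 := by rw [card_erase_of_mem hx, htq]
  rw [mem_stairFamily]
  by_cases hxn : n ≤ (x : ℕ) + 2 * j + 2
  · obtain ⟨i, hij, hxi⟩ := (htop x hxn).1 hx
    have hjq : j ≤ q := htq ▸ card_stair (n := n) (j := j) (by omega) ▸
      card_le_card (stair_subset_of_mem_stairBlock htj)
    refine ⟨i, lt_min (by omega) (by omega), mem_stairBlock.2 ⟨hcard, fun y hy => ?_⟩⟩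
    rw [mem_erase]
    constructor
    · rintro ⟨hyx, hyt⟩
      obtain ⟨i', hi', hyi'⟩ := (htop y (by omega)).1 hyt
      refine ⟨i', lt_of_le_of_ne (by omega) fun h => hyx (Fin.ext ?_), hyi'⟩
      omega
    · rintro ⟨i', hi', hyi'⟩
      refine ⟨fun h => ?_, (htop y (by omega)).2 ⟨i', by omega, hyi'⟩⟩
      have := congrArg Fin.val h
      omega
  · have hjq : j < q := by
      have hxs : x ∉ stair n j := fun h => by obtain ⟨i, hi, h⟩ := mem_stair.1 h; omega
      have := card_le_card (subset_erase.2 ⟨stair_subset_of_mem_stairBlock htj, hxs⟩)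
      rw [card_stair (by omega), hcard] at this
      have := card_pos.2 ⟨x, hx⟩
      omega
    refine ⟨j, lt_min hj hjq, mem_stairBlock.2 ⟨hcard, fun y hy => ?_⟩⟩
    rw [mem_erase, ← htop y hy]
    exact and_iff_right_of_imp fun _ h => hxn (h ▸ hy)

lemma toColex_lt_stair {r q : ℕ} (hrn : 2 * r ≤ n) {t : Finset (Fin n)}
    (ht : t ∈ stairFamily n r q) : toColex t < toColex (stair n r) := by
  obtain ⟨j, hj, htj⟩ := mem_stairFamily.1 ht
  have htop := (mem_stairBlock.1 htj).2
  rw [Colex.toColex_lt_toColex_iff_exists_forall_lt]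
  refine ⟨⟨n - 2 * j - 2, by omega⟩, mem_stair.2 ⟨j, hj, by dsimp only; omega⟩,
    fun hw => ?_, fun b hbt hb => ?_⟩
  · obtain ⟨i, hi, h⟩ := (htop _ (by dsimp only; omega)).1 hw
    dsimp only at h
    omega
  · by_contra! hwb
    obtain ⟨i, hi, h⟩ := (htop b (by rw [Fin.le_def] at hwb; dsimp only at hwb; omega)).1 hbt
    exact hb (mem_stair.2 ⟨i, by omega, h⟩)

lemma card_stair_union_below {r ℓ : ℕ} (h : 2 * r + ℓ ≤ n) :
    #(stair n r ∪ below n ℓ) = r + ℓ := by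
  rw [card_union_of_disjoint (disjoint_stair_below (by omega)), card_stair (by omega),
    card_below (by omega)]

lemma card_lt_card_of_eq_above {s t : Finset (Fin n)} {w : Fin n} (hwt : w ∉ t)
    (hws : below n (w + 1) ⊆ s) (h : {a ∈ t | w < a} = {a ∈ s | w < a}) : #t < #s := by
  have hlow : {a ∈ t | ¬w < a} ⊆ below n w := fun a ha => by
    rw [mem_filter, not_lt] at ha
    exact mem_below.2 (lt_of_le_of_ne ha.2 fun h => hwt (Fin.ext h ▸ ha.1))
  have hlow' : below n (w + 1) ⊆ {a ∈ s | ¬w < a} := fun a ha =>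
    mem_filter.2 ⟨hws ha, by rw [Fin.lt_def]; have := mem_below.1 ha; omega⟩
  have ht := card_filter_add_card_filter_not (s := t) (w < ·)
  have hs := card_filter_add_card_filter_not (s := s) (w < ·)
  have hlow_card := card_le_card hlow
  have hlow'_card := card_le_card hlow'
  rw [card_below w.is_le'] at hlow_card
  rw [card_below w.is_lt] at hlow'_card
  rw [h] at ht
  omega

lemma mem_stairFamily_of_toColex_lt {r ℓ : ℕ} (h : 2 * r + ℓ ≤ n) {t : Finset (Fin n)}
    (ht : #t = r + ℓ) (hlt : toColex t < toColex (stair n r ∪ below n ℓ)) :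
    t ∈ stairFamily n r (r + ℓ) := by
  obtain ⟨w, hw, hagree⟩ := Colex.lt_iff_exists_filter_lt.1 hlt
  obtain ⟨hwS, hwt⟩ := mem_sdiff.1 hw
  rcases mem_union.1 hwS with hwr | hwℓ
  · obtain ⟨i, hi, hwi⟩ := mem_stair.1 hwr
    refine mem_stairFamily.2 ⟨i, hi, mem_stairBlock.2 ⟨ht, fun y hy => ?_⟩⟩
    rcases eq_or_lt_of_le (show w ≤ y from Fin.le_def.2 (by omega)) with rfl | hwy
    · exact iff_of_false hwt fun ⟨i', hi', h⟩ => by omega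
    have hyt : y ∈ t ↔ y ∈ stair n r ∪ below n ℓ := by
      simpa [hwy] using congrArg (y ∈ ·) hagree
    rw [hyt, mem_union, mem_below, mem_stair]
    rw [Fin.lt_def] at hwy
    constructor
    · rintro (⟨i', hi', h⟩ | h)
      · exact ⟨i', by omega, h⟩
      · omega
    · rintro ⟨i', hi', h⟩
      exact .inl ⟨i', by omega, h⟩
  · have hws : below n (w + 1) ⊆ stair n r ∪ below n ℓ := fun a ha =>
      mem_union_right _ (mem_below.2 (by have := mem_below.1 ha; have := mem_below.1 hwℓ; omega))
    have := card_lt_card_of_eq_above hwt hws hagree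
    rw [ht, card_stair_union_below h] at this
    omega

end Stair

lemma stairSum_succ (n r q : ℕ) :
    stairSum n (r + 1) q = stairSum n r q + (n - 2 * r - 2).choose (q - r) :=
  sum_range_succ _ _

lemma stairSum_add_two (n r q : ℕ) :
    stairSum (n + 2) (r + 1) (q + 1) = n.choose (q + 1) + stairSum n r q := by
  rw [stairSum, sum_range_succ', add_comm]
  congr 1
  exact sum_congr rfl fun j _ => by congr 1 <;> omega

lemma stairSum_symm {n r q : ℕ} (hrq : r ≤ q + 1) (hn : q + r + 1 ≤ n) :
    stairSum n r (n - 2 - q) = stairSum n r q :=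
  sum_congr rfl fun j hj => Nat.choose_symm_of_eq_add (by rw [mem_range] at hj; omega)

/-- The `(m+1)`-sets split into the families `W`, `Vᶜˢ` and `G` of `exists_isLevelCut`. -/
lemma choose_eq_stairSum {n m : ℕ} (hmn : 2 * m + 2 ≤ n) :
    n.choose (m + 1) =
      stairSum n (m + 2) (m + 1) + stairSum n m (n - m - 1) + stairSum n (m + 1) m := by
  induction m generalizing n with
  | zero =>
    simp [stairSum, sum_range_succ]
    omega
  | succ m ih =>
    obtain ⟨n, rfl⟩ : ∃ n', n = n' + 2 := ⟨n - 2, by omega⟩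
    rw [show n + 2 - (m + 1) - 1 = n - m - 1 + 1 by omega, stairSum_add_two, stairSum_add_two,
      stairSum_add_two, show n - m - 1 + 1 = n - m by omega, Nat.choose_symm (by omega),
      Nat.choose_succ_succ, Nat.choose_succ_succ, Nat.choose_succ_succ, ih (by omega)]
    ring

section KruskalKatona

open Colex

variable {n : ℕ}

lemma notMem_stairFamily_of_stair_subset {r q : ℕ} (hrn : 2 * r ≤ n) {s : Finset (Fin n)}
    (hs : stair n r ⊆ s) : s ∉ stairFamily n r q := fun h =>
  (toColex_lt_stair hrn h).not_ge (toColex_le_toColex_of_subset hs)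

lemma insert_stairFamily_subset_initSeg {r : ℕ} (hrn : 2 * r ≤ n) {s : Finset (Fin n)}
    (hs : stair n r ⊆ s) : insert s (stairFamily n r #s) ⊆ initSeg s :=
  insert_subset mem_initSeg_self fun _ ht => mem_initSeg.2
    ⟨(card_of_mem_stairFamily ht).symm,
      ((toColex_lt_stair hrn ht).trans_le (toColex_le_toColex_of_subset hs)).le⟩

lemma initSeg_stair_union_below_subset {r ℓ : ℕ} (h : 2 * r + ℓ ≤ n) :
    initSeg (stair n r ∪ below n ℓ) ⊆
      insert (stair n r ∪ below n ℓ) (stairFamily n r (r + ℓ)) := fun t ht => by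
  obtain ⟨hcard, hle⟩ := mem_initSeg.1 ht
  rcases hle.eq_or_lt with heq | hlt
  · exact mem_insert.2 (.inl (toColex_inj.1 heq))
  · exact mem_insert_of_mem <| mem_stairFamily_of_toColex_lt h
      (hcard ▸ card_stair_union_below h) hlt

lemma card_le_stairSum_of_card_shadow_le {r q : ℕ} (hrq : r ≤ q) (hn : q + r + 1 ≤ n)
    {𝒜 : Finset (Finset (Fin n))} (h𝒜 : (𝒜 : Set (Finset (Fin n))).Sized (q + 1))
    (hshadow : #(∂ 𝒜) ≤ stairSum n r q) : #𝒜 ≤ stairSum n r (q + 1) := by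
  by_contra! hlt
  set S := stair n r ∪ below n (q + 1 - r)
  have hS : #S = q + 1 := by rw [card_stair_union_below (by omega)]; omega
  have hinit : #(initSeg S) ≤ #𝒜 := by
    refine (card_le_card (initSeg_stair_union_below_subset (by omega))).trans ?_
    refine (card_insert_le _ _).trans ?_
    rw [show r + (q + 1 - r) = q + 1 by omega, card_stairFamily (by omega) (by omega)]
    omega
  have hzero : (⟨0, by omega⟩ : Fin n) ∈ S := mem_union_right _ (mem_below.2 (by dsimp only; omega))
  have hmin : S.min' ⟨_, hzero⟩ = ⟨0, by omega⟩ :=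
    le_antisymm (min'_le _ _ hzero) (le_min' _ _ _ fun y _ => Fin.le_def.2 (Nat.zero_le _))
  have hKK := kruskal_katona h𝒜 hinit (hS ▸ isInitSeg_initSeg)
  rw [shadow_initSeg ⟨_, hzero⟩, hmin] at hKK
  have hstair : stair n r ⊆ S.erase ⟨0, by omega⟩ := fun x hx =>
    mem_erase.2 ⟨fun h => by obtain ⟨i, hi, h'⟩ := mem_stair.1 hx; subst h; dsimp only at h'; omega,
      mem_union_left _ hx⟩
  have hlow := card_le_card (insert_stairFamily_subset_initSeg (by omega) hstair)
  rw [card_insert_of_notMem (notMem_stairFamily_of_stair_subset (by omega) hstair),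
    card_erase_of_mem hzero, hS, Nat.add_sub_cancel, card_stairFamily (by omega) (by omega)] at hlow
  omega

lemma card_le_of_card_shadow_lt {m : ℕ} (hmn : 2 * m + 2 ≤ n) {𝒜 : Finset (Finset (Fin n))}
    (h𝒜 : (𝒜 : Set (Finset (Fin n))).Sized (m + 1)) (hshadow : #(∂ 𝒜) < stairSum n (m + 1) m) :
    #𝒜 ≤ stairSum n m (m + 1) := by
  refine card_le_stairSum_of_card_shadow_le le_rfl (by omega) h𝒜 ?_
  rw [stairSum_succ, Nat.sub_self, Nat.choose_zero_right] at hshadow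
  omega

lemma card_le_of_card_upShadow_lt {m : ℕ} (hmn : 2 * m + 2 ≤ n) {𝒜 : Finset (Finset (Fin n))}
    (h𝒜 : (𝒜 : Set (Finset (Fin n))).Sized (m + 1)) (hshadow : #(∂⁺ 𝒜) < stairSum n (m + 1) m) :
    #𝒜 ≤ stairSum n m (n - m - 1) := by
  rw [← card_compls, show n - m - 1 = n - m - 2 + 1 by omega]
  refine card_le_stairSum_of_card_shadow_le (by omega) (by omega) (fun B hB => ?_) ?_
  · rw [mem_coe, mem_compls] at hB
    rw [← compl_compl B, card_compl, h𝒜 hB, Fintype.card_fin]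
    omega
  · rw [shadow_compls, card_compls]
    rw [← stairSum_symm (by omega) (by omega), stairSum_succ,
      show n - 2 - m - m = n - 2 * m - 2 by omega, Nat.choose_self,
      show n - 2 - m = n - m - 2 by omega] at hshadow
    omega

end KruskalKatona

lemma stairSum_le_of_isLevelCut {n m k : ℕ} (hmn : 2 * m + 2 ≤ n) {C : Finset (Finset (Fin n))}
    (hC : IsLevelCut univ m C) (hk : ∀ i, m ≤ i → i ≤ m + 2 → #{A ∈ C | #A = i} ≤ k) :
    stairSum n (m + 1) m ≤ k := by
  by_contra! hkK
  set level := powersetCard (m + 1) (univ : Finset (Fin n))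
  set W := {B ∈ level | ∀ A ⊆ B, #A = m → A ∈ C}
  set U := {B ∈ level | ∀ D, B ⊆ D → #D = m + 2 → D ∈ C}
  have hlevel {B} (hB : B ∈ level) : #B = m + 1 := (mem_powersetCard.1 hB).2
  have hcover : level ⊆ {A ∈ C | #A = m + 1} ∪ W ∪ U := fun B hB => by
    rcases hC B (subset_univ B) (hlevel hB) with h | h | h
    · exact mem_union_left _ (mem_union_left _ (mem_filter.2 ⟨h, hlevel hB⟩))
    · exact mem_union_left _ (mem_union_right _ (mem_filter.2 ⟨hB, h⟩))
    · exact mem_union_right _ (mem_filter.2 ⟨hB, fun D hBD hD => h D (subset_univ D) hBD hD⟩)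
  have hshadow : ∂ W ⊆ {A ∈ C | #A = m} := fun A hA => by
    obtain ⟨B, hB, hAB, hBA⟩ := mem_shadow_iff_exists_sdiff.1 hA
    have hA : #A = m := by
      have := card_sdiff_add_card_eq_card hAB
      rw [hBA, hlevel (mem_filter.1 hB).1] at this
      omega
    exact mem_filter.2 ⟨(mem_filter.1 hB).2 A hAB hA, hA⟩
  have hupShadow : ∂⁺ U ⊆ {A ∈ C | #A = m + 2} := fun D hD => by
    obtain ⟨B, hB, hBD, hDB⟩ := mem_upShadow_iff_exists_sdiff.1 hD
    have hD : #D = m + 2 := by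
      have := card_sdiff_add_card_eq_card hBD
      rw [hDB, hlevel (mem_filter.1 hB).1] at this
      omega
    exact mem_filter.2 ⟨(mem_filter.1 hB).2 D hBD hD, hD⟩
  have hW := card_le_of_card_shadow_lt (𝒜 := W) hmn (fun B hB => hlevel (mem_filter.1 hB).1)
    (((card_le_card hshadow).trans (hk m le_rfl (by omega))).trans_lt hkK)
  have hU := card_le_of_card_upShadow_lt (𝒜 := U) hmn (fun B hB => hlevel (mem_filter.1 hB).1)
    (((card_le_card hupShadow).trans (hk (m + 2) (by omega) le_rfl)).trans_lt hkK)
  have hcover_card := card_le_card hcover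
  have := card_union_le ({A ∈ C | #A = m + 1} ∪ W) U
  have := card_union_le {A ∈ C | #A = m + 1} W
  have hmid := hk (m + 1) (by omega) (by omega)
  have hid := choose_eq_stairSum hmn
  rw [stairSum_succ n (m + 1), stairSum_succ n m, Nat.add_sub_cancel_left, Nat.choose_one_right,
    Nat.sub_self, Nat.choose_zero_right] at hid
  simp only [level, card_powersetCard, card_univ, Fintype.card_fin] at hcover_card
  omega

lemma isLevelCut_union_sdiff {α : Type*} [Fintype α] [DecidableEq α] {m : ℕ}
    {F W U H : Finset (Finset α)} (hW : ∂ W ⊆ F) (hU : ∂⁺ U ⊆ H) :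
    IsLevelCut univ m (F ∪ (powersetCard (m + 1) univ \ (W ∪ U)) ∪ H) := fun B _ hB => by
  by_cases hBW : B ∈ W
  · refine .inr (.inl fun A hAB hA => mem_union_left _ (mem_union_left _ (hW ?_)))
    exact mem_shadow_iff_exists_sdiff.2 ⟨B, hBW, hAB, by rw [card_sdiff_of_subset hAB]; omega⟩
  by_cases hBU : B ∈ U
  · refine .inr (.inr fun D _ hBD hD => mem_union_right _ (hU ?_))
    exact mem_upShadow_iff_exists_sdiff.2 ⟨B, hBU, hBD, by rw [card_sdiff_of_subset hBD]; omega⟩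
  refine .inl (mem_union_left _ (mem_union_right _ (mem_sdiff.2 ⟨?_, ?_⟩)))
  · exact mem_powersetCard.2 ⟨subset_univ B, hB⟩
  · simp [hBW, hBU]

lemma card_filter_union_of_sized {α : Type*} [DecidableEq α] {F G H : Finset (Finset α)}
    {m k : ℕ} (hF : ∀ A ∈ F, #A = m) (hG : ∀ A ∈ G, #A = m + 1) (hH : ∀ A ∈ H, #A = m + 2)
    (hFk : #F = k) (hGk : #G = k) (hHk : #H = k) :
    (∀ A ∈ F ∪ G ∪ H, m ≤ #A ∧ #A ≤ m + 2) ∧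
      ∀ i, m ≤ i → i ≤ m + 2 → #{A ∈ F ∪ G ∪ H | #A = i} = k := by
  refine ⟨fun A hA => ?_, fun i hi hi' => ?_⟩
  · simp only [mem_union] at hA
    rcases hA with (hA | hA) | hA
    · rw [hF A hA]; omega
    · rw [hG A hA]; omega
    · rw [hH A hA]; omega
  obtain h | h | h : i = m ∨ i = m + 1 ∨ i = m + 2 := by omega
  · rw [← hFk]; congr 1; ext A; simp only [mem_filter, mem_union]; grind
  · rw [← hGk]; congr 1; ext A; simp only [mem_filter, mem_union]; grind
  · rw [← hHk]; congr 1; ext A; simp only [mem_filter, mem_union]; grind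

lemma exists_isLevelCut {n m : ℕ} (hmn : 2 * m + 2 ≤ n) :
    ∃ C : Finset (Finset (Fin n)), IsLevelCut univ m C ∧ (∀ A ∈ C, m ≤ #A ∧ #A ≤ m + 2) ∧
      ∀ i, m ≤ i → i ≤ m + 2 → #{A ∈ C | #A = i} = stairSum n (m + 1) m := by
  set F := stairFamily n (m + 1) m
  set W := stairFamily n (m + 2) (m + 1)
  set V := stairFamily n m (n - m - 1)
  set H := (stairFamily n (m + 1) (n - m - 2))ᶜˢ
  set level := powersetCard (m + 1) (univ : Finset (Fin n))
  set G := level \ (W ∪ Vᶜˢ)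
  have card_of_compl {D : Finset (Fin n)} {q : ℕ} (h : #Dᶜ = q) : #D = n - q := by
    rw [← compl_compl D, card_compl, Fintype.card_fin, h]
  have hF : ∀ A ∈ F, #A = m := fun A => card_of_mem_stairFamily
  have hG : ∀ B ∈ G, #B = m + 1 := fun B hB => (mem_powersetCard.1 (mem_sdiff.1 hB).1).2
  have hH : ∀ D ∈ H, #D = m + 2 := fun D hD => by
    rw [card_of_compl (card_of_mem_stairFamily (mem_compls.1 hD))]; omega
  have hWF : ∂ W ⊆ F := by
    have := shadow_stairFamily_subset (n := n) (r := m + 2) (q := m + 1) (by omega)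
    rwa [min_eq_right (by omega), Nat.add_sub_cancel] at this
  have hVH : ∂⁺ Vᶜˢ ⊆ H := by
    rw [upShadow_compls, compls_subset_compls]
    refine (shadow_stairFamily_subset (by omega)).trans ?_
    rw [show n - m - 1 - 1 = n - m - 2 by omega]
    exact stairFamily_mono (min_le_left _ _ |>.trans (by omega))
  have hWV : Disjoint W Vᶜˢ := disjoint_left.2 fun B hBW hBV => by
    obtain ⟨x, hx⟩ : ∃ x : Fin n, (x : ℕ) + 1 = n := ⟨⟨n - 1, by omega⟩, by dsimp only; omega⟩
    have := notMem_of_mem_stairFamily (mem_compls.1 hBV) hx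
    exact notMem_of_mem_stairFamily hBW hx (by simpa using this)
  have hWV_level : W ∪ Vᶜˢ ⊆ level := fun B hB => mem_powersetCard.2 ⟨subset_univ B, by
    rcases mem_union.1 hB with h | h
    · exact card_of_mem_stairFamily h
    · rw [card_of_compl (card_of_mem_stairFamily (mem_compls.1 h))]; omega⟩
  refine ⟨F ∪ G ∪ H, isLevelCut_union_sdiff hWF hVH, card_filter_union_of_sized hF hG hH ?_ ?_ ?_⟩
  · exact card_stairFamily le_rfl (by omega)
  · rw [card_sdiff_of_subset hWV_level, card_union_of_disjoint hWV, card_compls,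
      card_stairFamily (by omega) (by omega), card_stairFamily (by omega) (by omega),
      card_powersetCard, card_univ, Fintype.card_fin, choose_eq_stairSum hmn]
    omega
  · rw [card_compls, card_stairFamily (by omega) (by omega),
      show n - m - 2 = n - 2 - m by omega, stairSum_symm le_rfl (by omega)]

section Transfer

variable {n : ℕ}

def finSuccEmb (n : ℕ) : Fin n ↪ ℕ := Fin.valEmbedding.trans ⟨Nat.succ, Nat.succ_injective⟩

lemma map_univ_finSuccEmb : (univ : Finset (Fin n)).map (finSuccEmb n) = Icc 1 n := by
  ext a
  simp only [mem_map, mem_univ, true_and, mem_Icc, finSuccEmb, Function.Embedding.trans_apply,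
    Fin.valEmbedding_apply, Function.Embedding.coeFn_mk]
  exact ⟨by rintro ⟨x, rfl⟩; omega, fun h => ⟨⟨a - 1, by omega⟩, by dsimp only; omega⟩⟩

lemma card_filter_card_image_map {α β : Type*} [DecidableEq β] (f : α ↪ β)
    (C : Finset (Finset α)) (i : ℕ) : #{A ∈ C.image (map f) | #A = i} = #{A ∈ C | #A = i} := by
  rw [filter_image, card_image_of_injective _ (map_injective f)]
  simp only [card_map]

lemma exists_isCutsetIn {m : ℕ} (hmn : 2 * m + 2 ≤ n) :
    ∃ C : Finset (Finset ℕ), IsCutsetIn n C ∧ (∀ A ∈ C, m ≤ #A ∧ #A ≤ m + 2) ∧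
      ∀ i, m ≤ i → i ≤ m + 2 → #{A ∈ C | #A = i} = stairSum n (m + 1) m := by
  obtain ⟨C, hcut, hsize, hcount⟩ := exists_isLevelCut hmn
  have hsize' : ∀ A ∈ C.image (map (finSuccEmb n)), m ≤ #A ∧ #A ≤ m + 2 := by
    simpa using hsize
  refine ⟨C.image (map (finSuccEmb n)), ?_, hsize', fun i hi hi' => ?_⟩
  · rw [isCutsetIn_iff_isLevelCut (by omega) _ hsize', ← map_univ_finSuccEmb]
    · exact (isLevelCut_image_map_iff _).2 hcut
    · simp only [mem_image, forall_exists_index, and_imp, forall_apply_eq_imp_iff₂]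
      exact fun A _ => map_univ_finSuccEmb (n := n) ▸ map_subset_map.2 (subset_univ A)
  · rw [card_filter_card_image_map, hcount i hi hi']

lemma stairSum_le_of_isCutsetIn {m k : ℕ} (hmn : 2 * m + 2 ≤ n) {C : Finset (Finset ℕ)}
    (hC : IsCutsetIn n C) (hsize : ∀ A ∈ C, m ≤ #A ∧ #A ≤ m + 2)
    (hk : ∀ i, m ≤ i → i ≤ m + 2 → #{A ∈ C | #A = i} = k) : stairSum n (m + 1) m ≤ k := by
  set C' : Finset (Finset (Fin n)) := {A | A.map (finSuccEmb n) ∈ C}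
  have hC' : C'.image (map (finSuccEmb n)) = C := by
    ext A
    refine ⟨fun h => ?_, fun h => ?_⟩
    · obtain ⟨A', hA', rfl⟩ := mem_image.1 h
      exact (mem_filter.1 hA').2
    · obtain ⟨A', -, rfl⟩ := subset_map_iff.1 (map_univ_finSuccEmb ▸ hC.1 A h)
      exact mem_image_of_mem _ (mem_filter.2 ⟨mem_univ _, h⟩)
  have hcut := (isCutsetIn_iff_isLevelCut (by omega) hC.1 hsize).1 hC
  rw [← hC', ← map_univ_finSuccEmb, isLevelCut_image_map_iff] at hcut
  refine stairSum_le_of_isLevelCut hmn hcut fun i hi hi' => ?_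
  rw [← card_filter_card_image_map (finSuccEmb n), hC', hk i hi hi']

end Transfer

theorem gcut_add_two_general (n m : ℕ) (hmn : 2 * m + 2 ≤ n) :
    gcut n m (m + 2) = ∑ j ∈ Finset.range (m + 1), (n - 2 * j - 2).choose (m - j) := by
  obtain ⟨C, hC⟩ := exists_isCutsetIn hmn
  refine le_antisymm (Nat.sInf_le ⟨C, hC⟩) (le_csInf ⟨_, C, hC⟩ ?_)
  rintro k ⟨C, hcut, hsize, hk⟩
  exact stairSum_le_of_isCutsetIn hmn hcut hsize hk

/-- For all integers `n ≥ 2` and `0 ≤ m ≤ n/2 - 1`,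
`g_n(m,m+2) = ∑_{j=0}^{m} C(n-2j-2, m-j)`. -/
theorem gcut_add_two (n m : ℕ) (hn : 2 ≤ n) (hmn : 2 * m + 2 ≤ n) :
    gcut n m (m + 2) = ∑ j ∈ Finset.range (m + 1), (n - 2 * j - 2).choose (m - j) :=
  gcut_add_two_general n m hmn
end

section
/- Let m ≥ 0 and n be integers and let l be an integer with m+2 ≤ l ≤ n−m−1. Then g_n(m,l) ≤ Σ_{j=0}^{m} C(n−2j−2, m−j); that is, there is a cutset in 2^{[n]} containing exactly Σ_{j=0}^{m} C(n−2j−2, m−j) subsets of size i for each m ≤ i ≤ l and no subsets of any other size. -/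
open Finset

/-- Recursive cutset construction on ground set `Icc (a+1) n`, using levels `m, m+1, m+2`. -/
def cutAux (n : ℕ) : ℕ → ℕ → Finset (Finset ℕ)
  | 0, _ => {∅}
  | m+1, a =>
      (powersetCard (m+1) (Icc (a+3) n)) ∪
      (cutAux n m (a+2)).image (insert (a+2)) ∪
      (powersetCard (m+1) (Icc (a+3) n)).image (insert (a+1)) ∪
      (powersetCard (m+1) (Icc (a+3) n)).image (fun S => insert (a+1) (insert (a+2) S))

lemma cutAux_succ (n m a : ℕ) : cutAux n (m+1) a =
      (powersetCard (m+1) (Icc (a+3) n)) ∪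
      (cutAux n m (a+2)).image (insert (a+2)) ∪
      (powersetCard (m+1) (Icc (a+3) n)).image (insert (a+1)) ∪
      (powersetCard (m+1) (Icc (a+3) n)).image (fun S => insert (a+1) (insert (a+2) S)) := rfl

lemma cutAux_mem (n : ℕ) : ∀ m a, a + 2*m ≤ n → ∀ A ∈ cutAux n m a,
    A ⊆ Icc (a+1) n ∧ m ≤ A.card ∧ A.card ≤ m + 2 := by
  intro m
  induction m with
  | zero =>
    intro a _ A hA
    simp only [cutAux, mem_singleton] at hA
    subst hA
    exact ⟨empty_subset _, by simp⟩
  | succ m IH =>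
    intro a ha A hA
    rw [cutAux_succ] at hA
    simp only [mem_union, mem_image, mem_powersetCard] at hA
    rcases hA with (((⟨hsub, hcard⟩ | ⟨S, hS, rfl⟩) | ⟨S, ⟨hsub, hcard⟩, rfl⟩) | ⟨S, ⟨hsub, hcard⟩, rfl⟩)
    · exact ⟨hsub.trans (Icc_subset_Icc (by omega) le_rfl), by omega, by omega⟩
    · obtain ⟨h1, h2, h3⟩ := IH (a+2) (by omega) S hS
      have hq : a+2 ∉ S := fun h => by have := h1 h; rw [mem_Icc] at this; omega
      refine ⟨insert_subset (by rw [mem_Icc]; omega)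
        (h1.trans (Icc_subset_Icc (by omega) le_rfl)), ?_, ?_⟩ <;>
        rw [card_insert_of_notMem hq] <;> omega
    · have hp : a+1 ∉ S := fun h => by have := hsub h; rw [mem_Icc] at this; omega
      refine ⟨insert_subset (by rw [mem_Icc]; omega)
        (hsub.trans (Icc_subset_Icc (by omega) le_rfl)), ?_, ?_⟩ <;>
        rw [card_insert_of_notMem hp] <;> omega
    · have hq : a+2 ∉ S := fun h => by have := hsub h; rw [mem_Icc] at this; omega
      have hp : a+1 ∉ insert (a+2) S := by
        simp only [mem_insert]
        push_neg
        exact ⟨by omega, fun h => by have := hsub h; rw [mem_Icc] at this; omega⟩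
      refine ⟨insert_subset (by rw [mem_Icc]; omega)
        (insert_subset (by rw [mem_Icc]; omega)
          (hsub.trans (Icc_subset_Icc (by omega) le_rfl))), ?_, ?_⟩ <;>
        rw [card_insert_of_notMem hp, card_insert_of_notMem hq] <;> omega

lemma K_succ (n a m : ℕ) :
    ∑ j ∈ range (m+2), (n - a - 2*j - 2).choose (m+1 - j)
      = (n - a - 2).choose (m+1) + ∑ j ∈ range (m+1), (n - (a+2) - 2*j - 2).choose (m - j) := by
  rw [Finset.sum_range_succ']
  rw [add_comm]
  congr 1
  refine Finset.sum_congr rfl fun j _ => ?_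
  have h1 : n - a - 2*(j+1) - 2 = n - (a+2) - 2*j - 2 := by omega
  have h2 : m+1-(j+1) = m - j := by omega
  rw [h1, h2]

lemma cutAux_count (n : ℕ) : ∀ m a, a + 2*m ≤ n → ∀ i,
    ((cutAux n m a).filter (fun A => A.card = i)).card
      ≤ ∑ j ∈ range (m+1), (n - a - 2*j - 2).choose (m - j) := by
  intro m
  induction m with
  | zero =>
    intro a _ i
    calc ((cutAux n 0 a).filter (fun A => A.card = i)).card
        ≤ (cutAux n 0 a).card := card_filter_le _ _
      _ ≤ 1 := by simp [cutAux]
      _ ≤ _ := by simp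
  | succ m IH =>
    intro a ha i
    rw [cutAux_succ, filter_union, filter_union, filter_union]
    have hX : (Icc (a+3) n).card = n - a - 2 := by rw [Nat.card_Icc]; omega
    set fA := (powersetCard (m+1) (Icc (a+3) n)).filter (fun A => A.card = i) with hfA
    set fB := ((cutAux n m (a+2)).image (insert (a+2))).filter (fun A => A.card = i) with hfB
    set fC := ((powersetCard (m+1) (Icc (a+3) n)).image (insert (a+1))).filter
      (fun A => A.card = i) with hfC
    set fD := ((powersetCard (m+1) (Icc (a+3) n)).image
      (fun S => insert (a+1) (insert (a+2) S))).filter (fun A => A.card = i) with hfD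
    have hsum : (fA ∪ fB ∪ fC ∪ fD).card ≤ fA.card + fB.card + fC.card + fD.card := by
      calc (fA ∪ fB ∪ fC ∪ fD).card ≤ (fA ∪ fB ∪ fC).card + fD.card := card_union_le _ _
        _ ≤ ((fA ∪ fB).card + fC.card) + fD.card :=
            Nat.add_le_add_right (card_union_le _ _) _
        _ ≤ ((fA.card + fB.card) + fC.card) + fD.card :=
            Nat.add_le_add_right (Nat.add_le_add_right (card_union_le _ _) _) _
    -- bounds
    have hAle : fA.card ≤ (n - a - 2).choose (m+1) := by
      calc fA.card ≤ (powersetCard (m+1) (Icc (a+3) n)).card := card_filter_le _ _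
        _ = (n - a - 2).choose (m+1) := by rw [card_powersetCard, hX]
    have hA0 : i ≠ m+1 → fA = ∅ := by
      intro hi
      refine filter_eq_empty_iff.mpr fun A hA => ?_
      rw [mem_powersetCard] at hA
      omega
    have hBle : fB.card ≤ ∑ j ∈ range (m+1), (n - (a+2) - 2*j - 2).choose (m - j) := by
      have hsub : fB ⊆ ((cutAux n m (a+2)).filter (fun S => S.card = i - 1)).image
          (insert (a+2)) := by
        intro A hA
        rw [hfB, mem_filter, mem_image] at hA
        obtain ⟨⟨S, hS, rfl⟩, hcA⟩ := hA
        have hS' := (cutAux_mem n m (a+2) (by omega) S hS).1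
        have hq : a+2 ∉ S := fun h => by have := hS' h; rw [mem_Icc] at this; omega
        rw [card_insert_of_notMem hq] at hcA
        exact mem_image_of_mem _ (mem_filter.mpr ⟨hS, by omega⟩)
      calc fB.card ≤ _ := card_le_card hsub
        _ ≤ ((cutAux n m (a+2)).filter (fun S => S.card = i - 1)).card := card_image_le
        _ ≤ _ := IH (a+2) (by omega) (i-1)
    have hCle : fC.card ≤ (n - a - 2).choose (m+1) := by
      calc fC.card ≤ ((powersetCard (m+1) (Icc (a+3) n)).image (insert (a+1))).card :=
            card_filter_le _ _
        _ ≤ (powersetCard (m+1) (Icc (a+3) n)).card := card_image_le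
        _ = (n - a - 2).choose (m+1) := by rw [card_powersetCard, hX]
    have hC0 : i ≠ m+2 → fC = ∅ := by
      intro hi
      refine filter_eq_empty_iff.mpr fun A hA => ?_
      rw [mem_image] at hA
      obtain ⟨S, hS, rfl⟩ := hA
      rw [mem_powersetCard] at hS
      have hp : a+1 ∉ S := fun h => by have := hS.1 h; rw [mem_Icc] at this; omega
      rw [card_insert_of_notMem hp]
      omega
    have hDle : fD.card ≤ (n - a - 2).choose (m+1) := by
      calc fD.card ≤ _ := card_filter_le _ _
        _ ≤ (powersetCard (m+1) (Icc (a+3) n)).card := card_image_le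
        _ = (n - a - 2).choose (m+1) := by rw [card_powersetCard, hX]
    have hD0 : i ≠ m+3 → fD = ∅ := by
      intro hi
      refine filter_eq_empty_iff.mpr fun A hA => ?_
      rw [mem_image] at hA
      obtain ⟨S, hS, rfl⟩ := hA
      rw [mem_powersetCard] at hS
      have hq : a+2 ∉ S := fun h => by have := hS.1 h; rw [mem_Icc] at this; omega
      have hp : a+1 ∉ insert (a+2) S := by
        simp only [mem_insert]
        push_neg
        exact ⟨by omega, fun h => by have := hS.1 h; rw [mem_Icc] at this; omega⟩
      rw [card_insert_of_notMem hp, card_insert_of_notMem hq]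
      omega
    rw [K_succ]
    refine hsum.trans ?_
    by_cases h1 : i = m+1
    · rw [hC0 (by omega), hD0 (by omega), card_empty, add_zero, add_zero]
      exact Nat.add_le_add hAle hBle
    · by_cases h2 : i = m+2
      · rw [hA0 (by omega), hD0 (by omega), card_empty, zero_add, add_zero]
        exact (Nat.add_le_add hBle hCle).trans (le_of_eq (Nat.add_comm _ _))
      · by_cases h3 : i = m+3
        · rw [hA0 (by omega), hC0 (by omega), card_empty, zero_add, add_zero]
          exact (Nat.add_le_add hBle hDle).trans (le_of_eq (Nat.add_comm _ _))
        · rw [hA0 (by omega), hC0 (by omega), hD0 (by omega), card_empty, zero_add, add_zero,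
            add_zero]
          exact hBle.trans (Nat.le_add_left _ _)

lemma cutAux_cutset (n : ℕ) : ∀ m a (S : ℕ → Finset ℕ),
    S (m+2) ⊆ Icc (a+1) n →
    (∀ i, m ≤ i → i ≤ m+2 → (S i).card = i) →
    (∀ i, m ≤ i → i < m+2 → S i ⊆ S (i+1)) →
    ∃ i, m ≤ i ∧ i ≤ m+2 ∧ S i ∈ cutAux n m a := by
  intro m
  induction m with
  | zero =>
    intro a S _ hcard _
    refine ⟨0, le_rfl, by omega, ?_⟩
    have h0 : S 0 = ∅ := Finset.card_eq_zero.mp (hcard 0 le_rfl (by omega))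
    simp [cutAux, h0]
  | succ m IH =>
    intro a S hsub hcard hmono
    have hs12 : S (m+1) ⊆ S (m+2) := hmono (m+1) le_rfl (by omega)
    have hs23 : S (m+2) ⊆ S (m+3) := hmono (m+2) (by omega) (by omega)
    have hsub2 : S (m+2) ⊆ Icc (a+1) n := hs23.trans hsub
    have hsub1 : S (m+1) ⊆ Icc (a+1) n := hs12.trans hsub2
    -- membership helper for part D (level m+3)
    have memD : a+1 ∈ S (m+3) → a+2 ∈ S (m+3) → S (m+3) ∈ cutAux n (m+1) a := by
      intro hp hq
      rw [cutAux_succ]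
      refine mem_union_right _ (mem_image.mpr
        ⟨((S (m+3)).erase (a+1)).erase (a+2), mem_powersetCard.mpr ⟨?_, ?_⟩, ?_⟩)
      · intro x hx
        simp only [mem_erase] at hx
        have := hsub hx.2.2
        rw [mem_Icc] at this ⊢
        omega
      · rw [card_erase_of_mem (mem_erase.mpr ⟨by omega, hq⟩), card_erase_of_mem hp,
          hcard (m+3) (by omega) (by omega)]
        omega
      · rw [insert_erase (mem_erase.mpr ⟨by omega, hq⟩), insert_erase hp]
    by_cases hp2 : a+1 ∈ S (m+2)
    · by_cases hq2 : a+2 ∈ S (m+2)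
      · exact ⟨m+3, by omega, by omega, memD (hs23 hp2) (hs23 hq2)⟩
      · -- part C at level m+2
        refine ⟨m+2, by omega, by omega, ?_⟩
        rw [cutAux_succ]
        refine mem_union_left _ (mem_union_right _ (mem_image.mpr
          ⟨(S (m+2)).erase (a+1), mem_powersetCard.mpr ⟨?_, ?_⟩, insert_erase hp2⟩))
        · intro x hx
          rw [mem_erase] at hx
          have h1 := hsub2 hx.2
          have h2 : x ≠ a + 2 := fun h => hq2 (h ▸ hx.2)
          rw [mem_Icc] at h1 ⊢
          have := hx.1
          omega
        · rw [card_erase_of_mem hp2, hcard (m+2) (by omega) (by omega)]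
          omega
    · by_cases hq1 : a+2 ∈ S (m+1)
      · by_cases hp3 : a+1 ∈ S (m+3)
        · exact ⟨m+3, by omega, by omega, memD hp3 (hs23 (hs12 hq1))⟩
        · -- recurse on the chain with a+2 removed
          have hq : ∀ j, m ≤ j → j ≤ m+2 → a+2 ∈ S (j+1) := by
            intro j h1 h2
            rcases (show j = m ∨ j = m+1 ∨ j = m+2 by omega) with rfl | rfl | rfl
            · exact hq1
            · exact hs12 hq1
            · exact hs23 (hs12 hq1)
          obtain ⟨j, hj1, hj2, hjm⟩ := IH (a+2) (fun j => (S (j+1)).erase (a+2))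
            (by
              intro x hx
              rw [mem_erase] at hx
              have h1 := hsub hx.2
              have h2 : x ≠ a + 1 := fun h => hp3 (h ▸ hx.2)
              rw [mem_Icc] at h1 ⊢
              have := hx.1
              omega)
            (by
              intro j h1 h2
              rw [card_erase_of_mem (hq j h1 h2), hcard (j+1) (by omega) (by omega)]
              omega)
            (by
              intro j h1 h2
              exact erase_subset_erase _ (hmono (j+1) (by omega) (by omega)))
          refine ⟨j+1, by omega, by omega, ?_⟩
          rw [cutAux_succ]
          exact mem_union_left _ (mem_union_left _ (mem_union_right _
            (mem_image.mpr ⟨_, hjm, insert_erase (hq j hj1 hj2)⟩)))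
      · -- part A at level m+1
        have hp1 : a+1 ∉ S (m+1) := fun h => hp2 (hs12 h)
        refine ⟨m+1, le_rfl, by omega, ?_⟩
        rw [cutAux_succ]
        refine mem_union_left _ (mem_union_left _ (mem_union_left _
          (mem_powersetCard.mpr ⟨?_, hcard (m+1) le_rfl (by omega)⟩)))
        intro x hx
        have h1 := hsub1 hx
        have h2 : x ≠ a+1 := fun h => hp1 (h ▸ hx)
        have h3 : x ≠ a+2 := fun h => hq1 (h ▸ hx)
        rw [mem_Icc] at h1 ⊢
        omega

lemma choose_step (n r : ℕ) (h : 2*r + 1 ≤ n) : n.choose r ≤ n.choose (r+1) := by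
  have key := Nat.choose_succ_right_eq n r
  have h1 : n.choose r * (r+1) ≤ n.choose r * (n - r) := by
    apply Nat.mul_le_mul_left
    omega
  rw [← key] at h1
  exact Nat.le_of_mul_le_mul_right h1 (by omega)

lemma choose_steps (n : ℕ) : ∀ d r, 2*r + 2*d ≤ n + 1 → n.choose r ≤ n.choose (r + d) := by
  intro d
  induction d with
  | zero => intro r _; exact le_rfl
  | succ d IH =>
    intro r h
    calc n.choose r ≤ n.choose (r+1) := choose_step n r (by omega)
      _ ≤ n.choose (r+1+d) := IH (r+1) (by omega)
      _ = n.choose (r+(d+1)) := by congr 1; omega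

lemma choose_le_choose_mid (n m i : ℕ) (h1 : m ≤ i) (h2 : i + m + 1 ≤ n) :
    n.choose m ≤ n.choose i := by
  by_cases h : 2*i ≤ n+1
  · have := choose_steps n (i - m) m (by omega)
    rwa [show m + (i - m) = i by omega] at this
  · rw [← Nat.choose_symm (show i ≤ n by omega)]
    have := choose_steps n (n - i - m) m (by omega)
    rwa [show m + (n - i - m) = n - i by omega] at this

lemma K_le_choose (n : ℕ) : ∀ m a, a + 2*m ≤ n →
    (∑ j ∈ range (m+1), (n - a - 2*j - 2).choose (m - j)) ≤ (n - a).choose m := by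
  intro m
  induction m with
  | zero => intro a _; simp
  | succ m IH =>
    intro a ha
    rw [K_succ]
    have h1 : (∑ j ∈ range (m+1), (n - (a+2) - 2*j - 2).choose (m - j))
        ≤ (n - (a+2)).choose m := IH (a+2) (by omega)
    calc (n - a - 2).choose (m+1) + ∑ j ∈ range (m+1), (n - (a+2) - 2*j - 2).choose (m - j)
        ≤ (n - a - 2).choose (m+1) + (n - a - 2).choose m := by
          refine Nat.add_le_add_left (h1.trans (le_of_eq ?_)) _
          rw [show n - (a+2) = n - a - 2 from by omega]
      _ = (n - a - 2 + 1).choose (m+1) := by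
          rw [Nat.choose_succ_succ' (n - a - 2) m, Nat.add_comm]
      _ ≤ (n - a).choose (m+1) := Nat.choose_le_choose _ (by omega)

/-- For `m ≥ 0` and `m+2 ≤ l ≤ n-m-1`, `g_n(m,l) ≤ ∑_{j=0}^{m} C(n-2j-2, m-j)`. -/
theorem gcut_upper_bound (n m l : ℕ) (hl1 : m + 2 ≤ l) (hl2 : l ≤ n - m - 1) :
    gcut n m l ≤ ∑ j ∈ Finset.range (m + 1), (n - 2 * j - 2).choose (m - j) := by
  have hn : 2*m + 3 ≤ n := by omega
  set k := ∑ j ∈ Finset.range (m + 1), (n - 2 * j - 2).choose (m - j) with hk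
  have hK0 : (∑ j ∈ Finset.range (m+1), (n - 0 - 2*j - 2).choose (m - j)) = k := by
    rw [hk]
    refine Finset.sum_congr rfl fun j _ => ?_
    rw [show n - 0 - 2*j - 2 = n - 2*j - 2 from by omega]
  have hcnt : ∀ i, ((cutAux n m 0).filter (fun A => A.card = i)).card ≤ k := by
    intro i
    have := cutAux_count n m 0 (by omega) i
    rwa [hK0] at this
  have hmem0 : ∀ A ∈ cutAux n m 0, A ⊆ Icc 1 n ∧ m ≤ A.card ∧ A.card ≤ m + 2 := by
    have := cutAux_mem n m 0 (by omega)
    simpa using this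
  have hkle : ∀ i, m ≤ i → i ≤ l → k ≤ n.choose i := by
    intro i h1 h2
    have h3 : k ≤ n.choose m := by
      have := K_le_choose n m 0 (by omega)
      rw [hK0, Nat.sub_zero] at this
      exact this
    exact h3.trans (choose_le_choose_mid n m i h1 (by omega))
  have hex : ∀ i : ℕ, ∃ t : Finset (Finset ℕ),
      t ⊆ powersetCard i (Icc 1 n) \ ((cutAux n m 0).filter fun A => A.card = i) ∧
      (m ≤ i → i ≤ l → t.card = k - ((cutAux n m 0).filter fun A => A.card = i).card) := by
    intro i
    by_cases hi : m ≤ i ∧ i ≤ l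
    · have hfsub : ((cutAux n m 0).filter fun A => A.card = i) ⊆ powersetCard i (Icc 1 n) := by
        intro A hA
        rw [mem_filter] at hA
        rw [mem_powersetCard]
        exact ⟨(hmem0 A hA.1).1, hA.2⟩
      have hcardsd : k - ((cutAux n m 0).filter fun A => A.card = i).card
          ≤ (powersetCard i (Icc 1 n) \ ((cutAux n m 0).filter fun A => A.card = i)).card := by
        rw [card_sdiff_of_subset hfsub, card_powersetCard, Nat.card_Icc]
        have h4 := hkle i hi.1 hi.2
        have h5 : n + 1 - 1 = n := by omega
        rw [h5]
        omega
      obtain ⟨t, ht1, ht2⟩ := Finset.exists_subset_card_eq hcardsd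
      exact ⟨t, ht1, fun _ _ => ht2⟩
    · exact ⟨∅, empty_subset _, fun h1 h2 => absurd ⟨h1, h2⟩ hi⟩
  choose pad hpad1 hpad2 using hex
  set C : Finset (Finset ℕ) := cutAux n m 0 ∪ (Icc m l).biUnion pad with hC
  have hCsub : ∀ A ∈ C, A ⊆ Icc 1 n := by
    intro A hA
    rw [hC, mem_union] at hA
    rcases hA with h | h
    · exact (hmem0 A h).1
    · rw [mem_biUnion] at h
      obtain ⟨j, _, hAj⟩ := h
      have := hpad1 j hAj
      rw [mem_sdiff, mem_powersetCard] at this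
      exact this.1.1
  have hCcard : ∀ A ∈ C, m ≤ A.card ∧ A.card ≤ l := by
    intro A hA
    rw [hC, mem_union] at hA
    rcases hA with h | h
    · obtain ⟨_, h2, h3⟩ := hmem0 A h
      omega
    · rw [mem_biUnion] at h
      obtain ⟨j, hj, hAj⟩ := h
      rw [mem_Icc] at hj
      have := hpad1 j hAj
      rw [mem_sdiff, mem_powersetCard] at this
      omega
  unfold gcut
  apply Nat.sInf_le
  refine ⟨C, ⟨hCsub, ?_⟩, hCcard, ?_⟩
  · -- cutset property
    intro c hc
    obtain ⟨hcard, hmono, htop⟩ := hc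
    have hmono' : ∀ d j, j + d ≤ n → c j ⊆ c (j + d) := by
      intro d
      induction d with
      | zero => intro j _; exact subset_rfl
      | succ d IH =>
        intro j h
        exact (IH j (by omega)).trans (hmono (j+d) (by omega))
    have hsubtop : c (m+2) ⊆ Icc 1 n := by
      have h := hmono' (n - (m+2)) (m+2) (by omega)
      rw [show m+2 + (n - (m+2)) = n from by omega, htop] at h
      exact h
    obtain ⟨i, h1, h2, h3⟩ := cutAux_cutset n m 0 c (by simpa using hsubtop)
      (fun i hi1 hi2 => hcard i (by omega)) (fun i hi1 hi2 => hmono i (by omega))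
    exact ⟨i, by omega, by rw [hC]; exact mem_union_left _ h3⟩
  · -- exact counts
    intro i h1 h2
    have hfe : (C.filter fun A => A.card = i)
        = ((cutAux n m 0).filter fun A => A.card = i) ∪ pad i := by
      rw [hC, filter_union]
      congr 1
      ext A
      simp only [mem_filter, mem_biUnion, mem_Icc]
      constructor
      · rintro ⟨⟨j, hj, hAj⟩, hAc⟩
        have hA' := hpad1 j hAj
        rw [mem_sdiff, mem_powersetCard] at hA'
        have hcj : A.card = j := hA'.1.2
        rwa [show j = i by omega] at hAj
      · intro hA
        have hA' := hpad1 i hA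
        rw [mem_sdiff, mem_powersetCard] at hA'
        exact ⟨⟨i, ⟨h1, h2⟩, hA⟩, hA'.1.2⟩
    have hdis : Disjoint ((cutAux n m 0).filter fun A => A.card = i) (pad i) := by
      rw [Finset.disjoint_left]
      intro A hAf hAp
      have := hpad1 i hAp
      rw [mem_sdiff] at this
      exact this.2 hAf
    rw [hfe, card_union_of_disjoint hdis, hpad2 i h1 h2]
    have := hcnt i
    omega
end

section
/- Let m ≥ 1 and n be integers with n ≥ 3^{m+1}(m+1). Then C(n−3,m) < g_n(m,n−m). -/
open Finset

/-!
Let `C` be a cutset on the levels `m, …, n - m` with at most `k ≤ C(n - 3, m)` sets per level;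
we build a maximal chain missing `C`. Let `R_j` be the family of `(n - j)`-sets reachable from
`[n]` by deleting one element at a time without ever entering `C`. Each step loses at most `k`
sets of the shadow, and by Kruskal–Katona a family of at least
`C(a, r) + C(b, r - 1) + C(g, r - 2)` sets of size `r` (`a > b ≥ g`) has a shadow of size at least
`C(a, r - 1) + C(b, r - 2) + C(g, r - 3)`.
Starting at level `n - m - 2`, the cascade `C(n-1, i) + C(n-3, i-1) + C(i+m-2, i-2)` is therefore
a lower bound for the reachable sets of size `i` as long as `k ≤ C(i + m - 2, m + 1)`, which
`n ≥ 3^{m+1}(m+1)` guarantees down to `i = n / 2`. So more than `C(n-1, i)` sets of level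
`i = ⌈n/2⌉` are reachable from `[n]`, and dually (complements) more than `C(n-1, i-1)` are reachable
upwards from `∅`. As `C(n-1, i) + C(n-1, i-1) = C(n, i)`, some set is reachable both ways, and the
two paths form a maximal chain avoiding `C`.
-/

open Finset.Colex
open scoped FinsetFamily

section Colex

variable {N : ℕ}

lemma notMem_of_mem_initSeg_of_forall_lt {s t : Finset (Fin N)} {a : Fin N}
    (h : ∀ x ∈ s, x < a) (ht : t ∈ initSeg s) : a ∉ t :=
  fun hat => (forall_lt_mono (mem_initSeg.1 ht).2 h a hat).false

lemma initSeg_insert_of_forall_lt {s : Finset (Fin N)} {a : Fin N} (h : ∀ x ∈ s, x < a) :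
    initSeg (insert a s) = powersetCard (#s + 1) (Iio a) ∪ (initSeg s).image (insert a) := by
  have has : a ∉ s := fun ha => (h a ha).false
  ext t
  simp only [mem_union, mem_powersetCard, mem_image, mem_initSeg, card_insert_of_notMem has]
  constructor
  · rintro ⟨hcard, hle⟩
    by_cases hat : a ∈ t
    · refine Or.inr ⟨t.erase a, ⟨?_, ?_⟩, insert_erase hat⟩
      · rw [card_erase_of_mem hat]; omega
      · simpa [sdiff_singleton_eq_erase, has] using
          (toColex_sdiff_le_toColex_sdiff (u := {a}) (by simpa using hat) (by simp)).2 hle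
    · refine Or.inl ⟨fun x hx => mem_Iio.2 ?_, hcard.symm⟩
      refine lt_of_le_of_ne (forall_le_mono hle (fun b hb => ?_) x hx) (ne_of_mem_of_not_mem hx hat)
      rcases mem_insert.1 hb with rfl | hb
      exacts [le_rfl, (h b hb).le]
  · rintro (⟨hsub, hcard⟩ | ⟨t', ⟨hcard, hle⟩, rfl⟩)
    · refine ⟨hcard.symm, ?_⟩
      calc toColex t ≤ toColex {a} :=
            (toColex_lt_singleton.2 fun x hx => mem_Iio.1 (hsub hx)).le
        _ ≤ toColex (insert a s) := toColex_le_toColex_of_subset (by simp)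
    · have hat' : a ∉ t' := notMem_of_mem_initSeg_of_forall_lt h (mem_initSeg.2 ⟨hcard, hle⟩)
      refine ⟨by rw [card_insert_of_notMem hat', hcard], ?_⟩
      refine (toColex_sdiff_le_toColex_sdiff (u := {a}) (by simp) (by simp)).1 ?_
      simpa [sdiff_singleton_eq_erase, erase_insert hat', erase_insert has] using hle

lemma card_initSeg_insert_of_forall_lt {s : Finset (Fin N)} {a : Fin N} (h : ∀ x ∈ s, x < a) :
    #(initSeg (insert a s)) = (a : ℕ).choose (#s + 1) + #(initSeg s) := by
  have hdisj : Disjoint (powersetCard (#s + 1) (Iio a)) ((initSeg s).image (insert a)) := by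
    refine disjoint_left.2 fun t ht ht' => ?_
    obtain ⟨t', -, rfl⟩ := mem_image.1 ht'
    exact (mem_Iio.1 ((mem_powersetCard.1 ht).1 (mem_insert_self a t'))).false
  have hinj : Set.InjOn (insert a) (initSeg s : Set (Finset (Fin N))) := fun x hx y hy hxy => by
    simpa [erase_insert (notMem_of_mem_initSeg_of_forall_lt h hx),
      erase_insert (notMem_of_mem_initSeg_of_forall_lt h hy)] using congrArg (erase · a) hxy
  rw [initSeg_insert_of_forall_lt h, card_union_of_disjoint hdisj, card_powersetCard,
    card_image_of_injOn hinj, Fin.card_Iio]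

lemma card_initSeg_le_card_shadow {s : Finset (Fin N)} {a : Fin N} {𝒜 : Finset (Finset (Fin N))}
    (hs : ∀ x ∈ s, a < x) (h𝒜 : (𝒜 : Set (Finset (Fin N))).Sized (#s + 1))
    (hcard : #(initSeg (insert a s)) ≤ #𝒜) : #(initSeg s) ≤ #(∂ 𝒜) := by
  have hne : (insert a s).Nonempty := insert_nonempty a s
  have hmin : (insert a s).min' hne = a :=
    le_antisymm (min'_le _ _ (mem_insert_self a s)) (le_min' _ _ _ fun x hx => by
      rcases mem_insert.1 hx with rfl | hx
      exacts [le_rfl, (hs x hx).le])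
  have has : a ∉ s := fun ha => (hs a ha).false
  have hinit : IsInitSeg (initSeg (insert a s)) (#s + 1) := by
    simpa [card_insert_of_notMem has] using isInitSeg_initSeg (s := insert a s)
  simpa [shadow_initSeg hne, hmin, erase_insert has] using kruskal_katona h𝒜 hcard hinit

def finIco (N l g : ℕ) : Finset (Fin N) := {x | l ≤ (x : ℕ) ∧ (x : ℕ) < g}

variable {l g b a : ℕ}

@[simp] lemma mem_finIco {x : Fin N} : x ∈ finIco N l g ↔ l ≤ (x : ℕ) ∧ (x : ℕ) < g := by
  simp [finIco]

lemma card_finIco (hgN : g ≤ N) : #(finIco N l g) = g - l := by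
  have : (finIco N l g).map Fin.valEmbedding = Ico l g := by
    ext y
    simp only [mem_map, mem_finIco, Fin.valEmbedding_apply, mem_Ico]
    exact ⟨by rintro ⟨x, hx, rfl⟩; exact hx, fun hy => ⟨⟨y, by omega⟩, hy, rfl⟩⟩
  rw [← card_map, this, Nat.card_Ico]

lemma finIco_succ_right (hlg : l ≤ g) (hgN : g < N) :
    finIco N l (g + 1) = insert ⟨g, hgN⟩ (finIco N l g) := by
  ext x
  simp only [mem_finIco, mem_insert, Fin.ext_iff]
  omega

lemma initSeg_empty : initSeg (∅ : Finset (Fin N)) = {∅} := by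
  ext t
  simp only [mem_initSeg, card_empty, mem_singleton]
  exact ⟨fun h => card_eq_zero.1 h.1.symm, by rintro rfl; simp⟩

lemma card_initSeg_finIco (hlg : l ≤ g) (hgN : g ≤ N) :
    #(initSeg (finIco N l g)) = g.choose (g - l) := by
  induction g, hlg using Nat.le_induction with
  | base =>
    have : finIco N l l = ∅ := by ext x; simp
    simp [this, initSeg_empty]
  | succ g hlg ih =>
    rw [finIco_succ_right hlg (by omega), card_initSeg_insert_of_forall_lt, ih (by omega),
      card_finIco (by omega), show g + 1 - l = g - l + 1 by omega, Nat.choose_succ_succ',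
      add_comm]
    intro x hx
    simpa [Fin.lt_def] using (mem_finIco.1 hx).2

lemma card_initSeg_cascade (hlg : l ≤ g) (hgb : g ≤ b) (hba : b < a) (haN : a < N) :
    #(initSeg (insert ⟨a, haN⟩ (insert ⟨b, by omega⟩ (finIco N l g)))) =
      a.choose (g - l + 2) + b.choose (g - l + 1) + g.choose (g - l) := by
  have hb : ∀ x ∈ finIco N l g, x < ⟨b, by omega⟩ := fun x hx => by
    simp only [mem_finIco] at hx; simp only [Fin.lt_def]; omega
  have ha : ∀ x ∈ insert ⟨b, by omega⟩ (finIco N l g), x < ⟨a, haN⟩ := fun x hx => by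
    rcases mem_insert.1 hx with rfl | hx
    · exact Fin.lt_def.2 hba
    · exact (hb x hx).trans (Fin.lt_def.2 hba)
  rw [card_initSeg_insert_of_forall_lt ha, card_initSeg_insert_of_forall_lt hb,
    card_insert_of_notMem fun hmem => (hb _ hmem).false, card_finIco (by omega),
    card_initSeg_finIco hlg (by omega)]
  ring

lemma choose_cascade_le_card_shadow {𝒜 : Finset (Finset (Fin N))} {q : ℕ} (hg : g = l + q + 1)
    (hgb : g ≤ b) (hba : b < a) (haN : a < N) (h𝒜 : (𝒜 : Set (Finset (Fin N))).Sized (q + 3))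
    (hcard : a.choose (q + 3) + b.choose (q + 2) + g.choose (q + 1) ≤ #𝒜) :
    a.choose (q + 2) + b.choose (q + 1) + g.choose q ≤ #(∂ 𝒜) := by
  set s : Finset (Fin N) := insert ⟨a, haN⟩ (insert ⟨b, by omega⟩ (finIco N (l + 1) g)) with hs
  have hsplit : insert ⟨a, haN⟩ (insert ⟨b, by omega⟩ (finIco N l g)) =
      insert ⟨l, by omega⟩ s := by
    ext x
    simp only [s, mem_insert, mem_finIco, Fin.ext_iff]
    omega
  have hls : ∀ x ∈ s, (⟨l, by omega⟩ : Fin N) < x := fun x hx => by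
    simp only [s, mem_insert, mem_finIco, Fin.ext_iff] at hx
    simp only [Fin.lt_def]
    omega
  have hcs : #s = q + 2 := by
    rw [hs, card_insert_of_notMem, card_insert_of_notMem, card_finIco (by omega)]
    · omega
    all_goals simp [Fin.ext_iff]; omega
  have := card_initSeg_le_card_shadow hls (by rwa [hcs]) <| by
    rwa [← hsplit, card_initSeg_cascade (by omega) hgb hba haN, show g - l = q + 1 by omega]
  rwa [card_initSeg_cascade (by omega) hgb hba haN, show g - (l + 1) = q by omega] at this

end Colex

section Binomial

lemma choose_eq_choose_add_choose {x y X Y : ℕ} (hX : X = x + 1) (hY : Y = y + 1) :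
    X.choose Y = x.choose y + x.choose Y := by
  subst hX hY
  exact Nat.choose_succ_succ' x y

lemma choose_le_choose_of_le_of_le_sub {n m i : ℕ} (hmi : m ≤ i) (hin : i ≤ n - m) :
    n.choose m ≤ n.choose i := by
  have hmono : ∀ a b, a ≤ b → b ≤ n / 2 → n.choose a ≤ n.choose b := fun a b hab hb => by
    induction b, hab using Nat.le_induction with
    | base => exact le_rfl
    | succ b _ ih => exact (ih (by omega)).trans (Nat.choose_le_succ_of_lt_half_left (by omega))
  by_cases hi : 2 * i ≤ n
  · exact hmono m i hmi (by omega)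
  · rw [← Nat.choose_symm (show i ≤ n by omega)]
    exact hmono m (n - i) (by omega) (by omega)

lemma choose_le_add_choose_succ {c x m : ℕ} (h : (m + 1) * c ^ m ≤ x ^ (m + 1)) :
    c.choose m ≤ (x + m).choose (m + 1) := by
  have hx : x ^ (m + 1) ≤ (x + m).descFactorial (m + 1) := by
    simpa using Nat.pow_sub_le_descFactorial (x + m) (m + 1)
  refine Nat.le_of_mul_le_mul_left ?_ (Nat.factorial_pos (m + 1))
  calc (m + 1).factorial * c.choose m = (m + 1) * c.descFactorial m := by
        rw [Nat.descFactorial_eq_factorial_mul_choose, Nat.factorial_succ, mul_assoc]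
    _ ≤ (m + 1) * c ^ m := Nat.mul_le_mul_left _ (Nat.descFactorial_le_pow c m)
    _ ≤ (x + m).descFactorial (m + 1) := h.trans hx
    _ = (m + 1).factorial * (x + m).choose (m + 1) :=
      Nat.descFactorial_eq_factorial_mul_choose _ _

lemma nine_mul_succ_le {n m : ℕ} (hm : 1 ≤ m) (hn : 3 ^ (m + 1) * (m + 1) ≤ n) :
    9 * (m + 1) ≤ n :=
  calc 9 * (m + 1) = 3 ^ 2 * (m + 1) := by norm_num
    _ ≤ 3 ^ (m + 1) * (m + 1) :=
      Nat.mul_le_mul_right _ (Nat.pow_le_pow_right (by norm_num) (by omega))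
    _ ≤ n := hn

lemma choose_le_half_add_choose_succ {n m : ℕ} (hm : 1 ≤ m) (hn : 3 ^ (m + 1) * (m + 1) ≤ n) :
    (n - 3).choose m ≤ (n / 2 + m - 2).choose (m + 1) := by
  set x := n / 2 - 2
  have h6 : 6 ≤ 3 ^ m * (m + 1) :=
    Nat.mul_le_mul (Nat.le_self_pow (by omega) 3) (by omega : 2 ≤ m + 1)
  have h3 : 3 ^ (m + 1) * (m + 1) = 3 * (3 ^ m * (m + 1)) := by ring
  have hx : 3 ^ m * (m + 1) ≤ x := by omega
  have hnx : n - 3 ≤ 3 * x := by omega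
  rw [show n / 2 + m - 2 = x + m by omega]
  refine choose_le_add_choose_succ ?_
  calc (m + 1) * (n - 3) ^ m ≤ (m + 1) * (3 * x) ^ m := by gcongr
    _ = (3 ^ m * (m + 1)) * x ^ m := by ring
    _ ≤ x * x ^ m := by gcongr
    _ = x ^ (m + 1) := by ring

end Binomial

lemma card_le_card_sdiff_add_card_filter {α : Type*} [DecidableEq α] {𝒜 ℬ : Finset (Finset α)}
    {r : ℕ} (h𝒜 : (𝒜 : Set (Finset α)).Sized r) : #𝒜 ≤ #(𝒜 \ ℬ) + #(ℬ.filter (#· = r)) := by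
  rw [← card_sdiff_add_card_inter 𝒜 ℬ]
  gcongr
  intro X hX
  exact mem_filter.2 ⟨(mem_inter.1 hX).2, h𝒜 (mem_inter.1 hX).1⟩

section Reach

variable {n k : ℕ} {D : Finset (Finset (Fin n))}

variable (D) in
/-- The `(n - j)`-sets reachable from `univ` by `j` single-element deletions without ever
entering `D`. -/
def reachDown : ℕ → Finset (Finset (Fin n))
  | 0 => {univ} \ D
  | j + 1 => ∂ (reachDown j) \ D

lemma notMem_of_mem_reachDown {j : ℕ} {X : Finset (Fin n)} (hX : X ∈ reachDown D j) :
    X ∉ D := by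
  cases j <;> exact (mem_sdiff.1 hX).2

lemma sized_reachDown (j : ℕ) : (reachDown D j : Set (Finset (Fin n))).Sized (n - j) := by
  induction j with
  | zero =>
    intro X hX
    simp only [reachDown, coe_sdiff, Set.mem_sdiff, mem_coe, mem_singleton] at hX
    simp [hX.1]
  | succ j ih =>
    rw [← Nat.sub_sub]
    exact ih.shadow.mono (by simp [reachDown])

lemma exists_chain_of_mem_reachDown {j : ℕ} {X : Finset (Fin n)} (hX : X ∈ reachDown D j) :
    ∃ E : ℕ → Finset (Fin n), E j = X ∧ (∀ i ≤ j, E i ∈ reachDown D i) ∧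
      ∀ i < j, E (i + 1) ⊆ E i := by
  induction j generalizing X with
  | zero => exact ⟨fun _ => X, rfl, fun i hi => by rwa [Nat.le_zero.1 hi], fun i hi => by omega⟩
  | succ j ih =>
    obtain ⟨Y, hY, a, -, rfl⟩ := mem_shadow_iff.1 (mem_sdiff.1 hX).1
    obtain ⟨E, hEj, hEmem, hEchain⟩ := ih hY
    refine ⟨Function.update E (j + 1) (Y.erase a), by simp, fun i hi => ?_, fun i hi => ?_⟩
    · rcases eq_or_lt_of_le hi with rfl | hi
      · simpa using hX
      · simpa [Function.update_of_ne hi.ne] using hEmem i (by omega)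
    · rcases eq_or_lt_of_le (Nat.le_of_lt_succ hi) with rfl | hi
      · simpa [hEj] using erase_subset a Y
      · simpa [Function.update_of_ne (by omega : i ≠ j + 1),
          Function.update_of_ne (by omega : i + 1 ≠ j + 1)] using hEchain i hi

lemma card_shadow_reachDown_le (hD : ∀ r, #(D.filter (#· = r)) ≤ k) (j : ℕ) :
    #(∂ (reachDown D j)) ≤ #(reachDown D (j + 1)) + k :=
  (card_le_card_sdiff_add_card_filter (sized_reachDown j).shadow).trans
    (Nat.add_le_add_left (hD _) _)

lemma powersetCard_sdiff_subset_reachDown {j : ℕ} (hj : j ≤ n) (hD : ∀ A ∈ D, #A ≤ n - j) :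
    powersetCard (n - j) univ \ D ⊆ reachDown D j := by
  induction j with
  | zero =>
    intro X hX
    simp only [mem_sdiff, mem_powersetCard, Nat.sub_zero] at hX
    simpa [reachDown, hX.2] using eq_univ_of_card X (by simpa using hX.1.2)
  | succ j ih =>
    intro X hX
    simp only [mem_sdiff, mem_powersetCard] at hX
    obtain ⟨a, -, ha⟩ := exists_mem_notMem_of_card_lt_card (t := univ) (s := X)
      (by simp only [hX.1.2, card_univ, Fintype.card_fin]; omega)
    have hcard : #(insert a X) = n - j := by rw [card_insert_of_notMem ha, hX.1.2]; omega
    refine mem_sdiff.2 ⟨mem_shadow_iff_insert_mem.2 ⟨a, ha, ih (by omega) (fun A hA => ?_) ?_⟩,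
      hX.2⟩
    · have := hD A hA; omega
    · refine mem_sdiff.2 ⟨mem_powersetCard.2 ⟨subset_univ _, hcard⟩, fun hmem => ?_⟩
      have := hD _ hmem
      omega

lemma choose_le_card_reachDown_add {j : ℕ} (hj : j ≤ n) (hDj : ∀ A ∈ D, #A ≤ n - j)
    (hD : ∀ r, #(D.filter (#· = r)) ≤ k) : n.choose (n - j) ≤ #(reachDown D j) + k := by
  have hsized : (powersetCard (n - j) (univ : Finset (Fin n)) : Set (Finset (Fin n))).Sized
      (n - j) :=
    Set.sized_powersetCard _ _
  calc n.choose (n - j) = #(powersetCard (n - j) (univ : Finset (Fin n))) := by simp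
    _ ≤ #(powersetCard (n - j) univ \ D) + k :=
      (card_le_card_sdiff_add_card_filter hsized).trans (Nat.add_le_add_left (hD _) _)
    _ ≤ #(reachDown D j) + k := by gcongr; exact powersetCard_sdiff_subset_reachDown hj hDj

lemma choose_cascade_le_card_reachDown_succ (hD : ∀ r, #(D.filter (#· = r)) ≤ k)
    {j l q g b a : ℕ} (hj : n - j = q + 3) (hg : g = l + q + 1) (hgb : g ≤ b) (hba : b < a)
    (han : a < n)
    (hcard : a.choose (q + 3) + b.choose (q + 2) + g.choose (q + 1) ≤ #(reachDown D j)) :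
    a.choose (q + 2) + b.choose (q + 1) + g.choose q ≤ #(reachDown D (j + 1)) + k :=
  (choose_cascade_le_card_shadow hg hgb hba han (hj ▸ sized_reachDown j) hcard).trans
    (card_shadow_reachDown_le hD j)

def cascadeBound (n m i : ℕ) : ℕ :=
  (n - 1).choose i + (n - 3).choose (i - 1) + (i + m - 2).choose (i - 2)

variable {m : ℕ}

lemma cascadeBound_le_card_reachDown_top (hD : ∀ r, #(D.filter (#· = r)) ≤ k)
    (hDtop : ∀ A ∈ D, #A ≤ n - m) (hm : 1 ≤ m) {i : ℕ} (hi : 3 ≤ i) (hin : i + m + 2 = n)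
    (hk : k ≤ (n - 3).choose m) (hk' : k ≤ (n - 4).choose (m + 1)) :
    cascadeBound n m i ≤ #(reachDown D (n - i)) := by
  rw [cascadeBound, show n - i = m + 1 + 1 by omega, show i + m - 2 = n - 4 by omega]
  have h0 := choose_le_card_reachDown_add (j := m) (by omega) hDtop hD
  rw [show n - m = i + 2 by omega] at h0
  have e1 := choose_eq_choose_add_choose (x := n - 1) (y := i + 1) (X := n) (Y := i + 2)
    (by omega) rfl
  have e2 := choose_eq_choose_add_choose (x := n - 2) (y := i) (X := n - 1) (Y := i + 1)
    (by omega) rfl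
  have e3 := choose_eq_choose_add_choose (x := n - 3) (y := i - 1) (X := n - 2) (Y := i)
    (by omega) (by omega)
  have e4 : (n - 3).choose (i - 1) = (n - 3).choose m := Nat.choose_symm_of_eq_add (by omega)
  have h1 := choose_cascade_le_card_reachDown_succ hD (j := m) (l := m - 1) (q := i - 1)
    (g := n - 3) (b := n - 2) (a := n - 1) (by omega) (by omega) (by omega) (by omega) (by omega)
    (by rw [show i - 1 + 3 = i + 2 by omega, show i - 1 + 2 = i + 1 by omega,
      show i - 1 + 1 = i by omega]; omega)
  rw [show i - 1 + 2 = i + 1 by omega, show i - 1 + 1 = i by omega] at h1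
  have h2 := choose_cascade_le_card_reachDown_succ hD (j := m + 1) (l := m) (q := i - 2)
    (g := n - 3) (b := n - 3) (a := n - 1) (by omega) (by omega) (by omega) (by omega) (by omega)
    (by rw [show i - 2 + 3 = i + 1 by omega, show i - 2 + 2 = i by omega,
      show i - 2 + 1 = i - 1 by omega]; omega)
  rw [show i - 2 + 2 = i by omega, show i - 2 + 1 = i - 1 by omega] at h2
  have e5 := choose_eq_choose_add_choose (x := n - 4) (y := i - 3) (X := n - 3) (Y := i - 2)
    (by omega) (by omega)
  have e6 : (n - 4).choose (i - 3) = (n - 4).choose (m + 1) :=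
    Nat.choose_symm_of_eq_add (by omega)
  omega

lemma cascadeBound_le_card_reachDown_of_succ (hD : ∀ r, #(D.filter (#· = r)) ≤ k) {i : ℕ}
    (hi : 3 ≤ i) (hin : i + m + 3 ≤ n) (hk : k ≤ (i + m - 2).choose (m + 1))
    (hcard : cascadeBound n m (i + 1) ≤ #(reachDown D (n - (i + 1)))) :
    cascadeBound n m i ≤ #(reachDown D (n - i)) := by
  rw [cascadeBound, show i + 1 + m - 2 = i + m - 1 by omega, Nat.add_sub_cancel,
    show i + 1 - 2 = i - 1 by omega] at hcard
  have h := choose_cascade_le_card_reachDown_succ hD (j := n - (i + 1)) (l := m) (q := i - 2)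
    (g := i + m - 1) (b := n - 3) (a := n - 1) (by omega) (by omega) (by omega) (by omega)
    (by omega) (by rwa [show i - 2 + 3 = i + 1 by omega, show i - 2 + 2 = i by omega,
      show i - 2 + 1 = i - 1 by omega])
  rw [show i - 2 + 2 = i by omega, show i - 2 + 1 = i - 1 by omega,
    show n - (i + 1) + 1 = n - i by omega] at h
  -- the `k` sets lost at level `i` are paid for by Pascal's rule on the last term
  have e1 := choose_eq_choose_add_choose (x := i + m - 2) (y := i - 3) (X := i + m - 1)
    (Y := i - 2) (by omega) (by omega)
  have e2 : (i + m - 2).choose (i - 3) = (i + m - 2).choose (m + 1) :=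
    Nat.choose_symm_of_eq_add (by omega)
  rw [cascadeBound]
  omega

lemma choose_lt_card_reachDown (hD : ∀ r, #(D.filter (#· = r)) ≤ k)
    (hDtop : ∀ A ∈ D, #A ≤ n - m) (hm : 1 ≤ m) {lam : ℕ} (hlam : 3 ≤ lam)
    (hk : k ≤ (n - 3).choose m) (hkl : k ≤ (lam + m - 2).choose (m + 1)) {i : ℕ} (hi : lam ≤ i)
    (hin : i + m + 2 ≤ n) : (n - 1).choose i < #(reachDown D (n - i)) := by
  have hbound : ∀ i, lam ≤ i → i ≤ n - m - 2 → cascadeBound n m i ≤ #(reachDown D (n - i)) := by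
    intro i hi hin
    induction hin using Nat.decreasingInduction with
    | self =>
      exact cascadeBound_le_card_reachDown_top hD hDtop hm (by omega) (by omega) hk
        (hkl.trans (Nat.choose_le_choose _ (by omega)))
    | of_succ i _ ih =>
      exact cascadeBound_le_card_reachDown_of_succ hD (by omega) (by omega)
        (hkl.trans (Nat.choose_le_choose _ (by omega))) (ih (by omega))
  have := hbound i hi (by omega)
  have := Nat.choose_pos (show i - 1 ≤ n - 3 by omega)
  rw [cascadeBound] at *
  omega

lemma card_filter_compls_le (hD : ∀ r, #(D.filter (#· = r)) ≤ k) (r : ℕ) :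
    #(Dᶜˢ.filter (#· = r)) ≤ k := by
  refine (card_le_card_of_injOn compl (fun X hX => ?_) compl_injective.injOn).trans (hD (n - r))
  simp only [coe_filter, mem_compls, Set.mem_ofPred_eq] at hX ⊢
  refine ⟨hX.1, ?_⟩
  rw [card_compl, Fintype.card_fin, hX.2]

lemma exists_mem_reachDown_compl_mem {i j : ℕ} (hij : i + j = n) (hi : 0 < i)
    (hT : (n - 1).choose i < #(reachDown D j)) (hU : (n - 1).choose j < #(reachDown Dᶜˢ i)) :
    ∃ X ∈ reachDown D j, Xᶜ ∈ reachDown Dᶜˢ i := by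
  have hsizedU : ((reachDown Dᶜˢ i)ᶜˢ : Set (Finset (Fin n))).Sized i := by
    simpa [show n - (n - i) = i by omega] using (sized_reachDown (D := Dᶜˢ) i).compls
  have hsizedT : (reachDown D j : Set (Finset (Fin n))).Sized i := by
    simpa [show n - j = i by omega] using sized_reachDown (D := D) j
  have hpascal : n.choose i = (n - 1).choose j + (n - 1).choose i := by
    rw [choose_eq_choose_add_choose (x := n - 1) (y := i - 1) (by omega) (by omega),
      Nat.choose_symm_of_eq_add (by omega : n - 1 = i - 1 + j)]
  obtain ⟨X, hX⟩ := inter_nonempty_of_card_lt_card_add_card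
    (s := powersetCard i (univ : Finset (Fin n)))
    (fun X hX => mem_powersetCard.2 ⟨subset_univ _, hsizedT hX⟩)
    (fun X hX => mem_powersetCard.2 ⟨subset_univ _, hsizedU hX⟩)
    (by rw [card_compls, card_powersetCard, card_univ, Fintype.card_fin]; omega)
  exact ⟨X, (mem_inter.1 hX).1, mem_compls.1 (mem_inter.1 hX).2⟩

lemma exists_maxChain_avoiding_of_mem_reachDown {i j : ℕ} (hij : i + j = n)
    {X : Finset (Fin n)} (hX : X ∈ reachDown D j) (hXc : Xᶜ ∈ reachDown Dᶜˢ i) :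
    ∃ c : ℕ → Finset (Fin n), (∀ l ≤ n, #(c l) = l) ∧ (∀ l < n, c l ⊆ c (l + 1)) ∧
      c n = univ ∧ ∀ l ≤ n, c l ∉ D := by
  obtain ⟨E, hEj, hE, hEchain⟩ := exists_chain_of_mem_reachDown hX
  obtain ⟨F, hFi, hF, hFchain⟩ := exists_chain_of_mem_reachDown hXc
  refine ⟨fun l => if l < i then (F l)ᶜ else E (n - l), fun l hl => ?_, fun l hl => ?_, ?_,
    fun l hl => ?_⟩ <;> dsimp only
  · split_ifs with hli
    · rw [card_compl, Fintype.card_fin, sized_reachDown l (hF l hli.le)]; omega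
    · rw [sized_reachDown _ (hE _ (by omega))]; omega
  · split_ifs with hl hl'
    · exact compl_subset_compl.2 (hFchain l hl)
    · rw [show n - (l + 1) = j by omega, hEj, ← compl_compl X, ← hFi, show i = l + 1 by omega]
      exact compl_subset_compl.2 (hFchain l (by omega))
    · omega
    · simpa [show n - (l + 1) + 1 = n - l by omega] using hEchain (n - (l + 1)) (by omega)
  · have h0 := hE 0 (Nat.zero_le _)
    simp only [reachDown, mem_sdiff, mem_singleton] at h0
    simp [show ¬ n < i by omega, h0.1]
  · split_ifs with hli
    · exact fun hmem => notMem_of_mem_reachDown (hF l hli.le) (mem_compls.2 hmem)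
    · exact notMem_of_mem_reachDown (hE _ (by omega))

lemma exists_maxChain_avoiding_of_card_filter_le (hm : 1 ≤ m) (hn : 3 ^ (m + 1) * (m + 1) ≤ n)
    (hDlev : ∀ A ∈ D, m ≤ #A ∧ #A ≤ n - m) (hD : ∀ r, #(D.filter (#· = r)) ≤ k)
    (hk : k ≤ (n - 3).choose m) :
    ∃ c : ℕ → Finset (Fin n), (∀ l ≤ n, #(c l) = l) ∧ (∀ l < n, c l ⊆ c (l + 1)) ∧
      c n = univ ∧ ∀ l ≤ n, c l ∉ D := by
  have h9 := nine_mul_succ_le hm hn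
  have hkl := hk.trans (choose_le_half_add_choose_succ hm hn)
  have hDc : ∀ A ∈ Dᶜˢ, #A ≤ n - m := fun A hA => by
    have := (hDlev _ (mem_compls.1 hA)).1
    rw [card_compl, Fintype.card_fin] at this
    have := card_le_univ A
    simp only [Fintype.card_fin] at this
    omega
  have hT := choose_lt_card_reachDown hD (fun A hA => (hDlev A hA).2) hm (lam := n / 2)
    (by omega) hk hkl (i := n - n / 2) (by omega) (by omega)
  have hU := choose_lt_card_reachDown (card_filter_compls_le hD) hDc hm (lam := n / 2)
    (by omega) hk hkl (i := n / 2) le_rfl (by omega)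
  rw [show n - (n - n / 2) = n / 2 by omega] at hT
  obtain ⟨X, hX, hXc⟩ := exists_mem_reachDown_compl_mem (by omega) (by omega) hT hU
  exact exists_maxChain_avoiding_of_mem_reachDown (by omega) hX hXc

end Reach

def shiftEmb (n : ℕ) : Fin n ↪ ℕ := ⟨fun x => x + 1, fun _ _ h => Fin.ext (Nat.succ_injective h)⟩

@[simp] lemma shiftEmb_apply {n : ℕ} (x : Fin n) : shiftEmb n x = x + 1 := rfl

lemma map_univ_shiftEmb (n : ℕ) : (univ : Finset (Fin n)).map (shiftEmb n) = Icc 1 n := by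
  ext y
  simp only [mem_map, mem_univ, true_and, shiftEmb_apply, mem_Icc]
  exact ⟨by rintro ⟨x, rfl⟩; omega, fun hy => ⟨⟨y - 1, by omega⟩, by simp only; omega⟩⟩

lemma isMaxChainIn_map_shiftEmb {n : ℕ} {c : ℕ → Finset (Fin n)} (hcard : ∀ l ≤ n, #(c l) = l)
    (hchain : ∀ l < n, c l ⊆ c (l + 1)) (htop : c n = univ) :
    IsMaxChainIn n fun l => (c l).map (shiftEmb n) :=
  ⟨fun l hl => by simpa using hcard l hl, fun l hl => map_subset_map.2 (hchain l hl),
    by simp only [htop, map_univ_shiftEmb]⟩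

lemma IsMaxChainIn.subset_last {n : ℕ} {c : ℕ → Finset ℕ} (hc : IsMaxChainIn n c) {l : ℕ}
    (hl : l ≤ n) : c l ⊆ c n := by
  induction hl using Nat.decreasingInduction with
  | self => exact subset_rfl
  | of_succ l hl ih => exact (hc.2.1 l hl).trans ih

theorem choose_lt_of_isCutsetIn {n m k : ℕ} {C : Finset (Finset ℕ)} (hm : 1 ≤ m)
    (hn : 3 ^ (m + 1) * (m + 1) ≤ n) (hC : IsCutsetIn n C)
    (hlev : ∀ A ∈ C, m ≤ #A ∧ #A ≤ n - m)
    (hcount : ∀ i, m ≤ i → i ≤ n - m → #(C.filter (#· = i)) = k) : (n - 3).choose m < k := by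
  by_contra! hk
  set D : Finset (Finset (Fin n)) := {A | A.map (shiftEmb n) ∈ C}
  have hCk : ∀ r, #(C.filter (#· = r)) ≤ k := fun r => by
    by_cases hr : m ≤ r ∧ r ≤ n - m
    · exact (hcount r hr.1 hr.2).le
    · rw [filter_false_of_mem fun A hA (hAr : #A = r) => hr (hAr ▸ hlev A hA)]
      exact Nat.zero_le k
  have hDk : ∀ r, #(D.filter (#· = r)) ≤ k := fun r =>
    (card_le_card_of_injOn (map (shiftEmb n)) (fun A hA => by simpa [D] using hA)
      (map_injective _).injOn).trans (hCk r)
  obtain ⟨c, hcard, hchain, htop, havoid⟩ := exists_maxChain_avoiding_of_card_filter_le hm hn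
    (fun A hA => by simpa using hlev _ (mem_filter.1 hA).2) hDk hk
  obtain ⟨l, hl, hmem⟩ := hC.2 _ (isMaxChainIn_map_shiftEmb hcard hchain htop)
  exact havoid l hl (by simpa [D] using hmem)

lemma exists_cutset_card_filter_eq_choose {n m : ℕ} (hmn : 2 * m ≤ n) :
    ∃ C : Finset (Finset ℕ), IsCutsetIn n C ∧ (∀ A ∈ C, m ≤ #A ∧ #A ≤ n - m) ∧
      ∀ i, m ≤ i → i ≤ n - m → #(C.filter (#· = i)) = n.choose m := by
  have hlevel : ∀ i, ∃ F : Finset (Finset ℕ), m ≤ i → i ≤ n - m →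
      F ⊆ powersetCard i (Icc 1 n) ∧ #F = n.choose m := fun i => by
    by_cases hi : m ≤ i ∧ i ≤ n - m
    · obtain ⟨F, hF, hFcard⟩ := exists_subset_card_eq (s := powersetCard i (Icc 1 n))
        (n := n.choose m) (by simpa using choose_le_choose_of_le_of_le_sub hi.1 hi.2)
      exact ⟨F, fun _ _ => ⟨hF, hFcard⟩⟩
    · exact ⟨∅, fun h1 h2 => absurd ⟨h1, h2⟩ hi⟩
  choose F hF using hlevel
  have hFm : F m = powersetCard m (Icc 1 n) :=
    eq_of_subset_of_card_le (hF m le_rfl (by omega)).1 (by simp [(hF m le_rfl (by omega)).2])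
  have hmemF : ∀ {i A}, m ≤ i → i ≤ n - m → A ∈ F i → A ⊆ Icc 1 n ∧ #A = i :=
    fun h1 h2 hA => mem_powersetCard.1 ((hF _ h1 h2).1 hA)
  refine ⟨(Icc m (n - m)).biUnion F, ⟨fun A hA => ?_, fun c hc => ?_⟩, fun A hA => ?_,
    fun i h1 h2 => ?_⟩
  · obtain ⟨i, hi, hA⟩ := mem_biUnion.1 hA
    exact (hmemF (mem_Icc.1 hi).1 (mem_Icc.1 hi).2 hA).1
  · refine ⟨m, by omega, mem_biUnion.2 ⟨m, mem_Icc.2 ⟨le_rfl, by omega⟩, ?_⟩⟩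
    rw [hFm, mem_powersetCard, ← hc.2.2]
    exact ⟨hc.subset_last (by omega), hc.1 m (by omega)⟩
  · obtain ⟨i, hi, hA⟩ := mem_biUnion.1 hA
    rw [(hmemF (mem_Icc.1 hi).1 (mem_Icc.1 hi).2 hA).2]
    exact mem_Icc.1 hi
  · rw [← (hF i h1 h2).2]
    congr 1
    ext A
    simp only [mem_filter, mem_biUnion, mem_Icc]
    constructor
    · rintro ⟨⟨j, hj, hA⟩, hAi⟩
      obtain rfl : j = i := (hmemF hj.1 hj.2 hA).2.symm.trans hAi
      exact hA
    · exact fun hA => ⟨⟨i, ⟨h1, h2⟩, hA⟩, (hmemF h1 h2 hA).2⟩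

/-- For `m ≥ 1` and `n ≥ 3^{m+1}(m+1)`, one has `C(n-3,m) < g_n(m,n-m)`. -/
theorem gcut_symmetric_lower_bound (n m : ℕ) (hm : 1 ≤ m)
    (hn : 3 ^ (m + 1) * (m + 1) ≤ n) :
    (n - 3).choose m < gcut n m (n - m) := by
  have h2m : 2 * m ≤ n := by have := nine_mul_succ_le hm hn; omega
  rw [gcut, Nat.lt_iff_add_one_le]
  refine le_csInf ⟨_, exists_cutset_card_filter_eq_choose h2m⟩ ?_
  rintro k ⟨C, hC, hlev, hcount⟩
  exact choose_lt_of_isCutsetIn hm hn hC hlev hcount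
end

section
/- Let n be a positive integer, let m be an integer with 1 ≤ m ≤ n/2, and let d be an integer with 0 ≤ d ≤ m−1. Then Σ_{j=0}^{m−d−1} C(n−2j−2, m−j) + Σ_{j=0}^{m−d−1} C(n−2j−1, m+2−j) + C(n−2m+2d, d+2) = C(n, m+2). -/
lemma binom_col_aux (k : ℕ) : ∀ n m d : ℕ, m = d + k + 1 → 2 * m ≤ n →
    ∑ j ∈ Finset.range (m - d), (n - 2 * j - 2).choose (m - j) +
      ∑ j ∈ Finset.range (m - d), (n - 2 * j - 1).choose (m + 2 - j) +
      (n + 2 * d - 2 * m).choose (d + 2) = n.choose (m + 2) := by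
  induction k with
  | zero =>
    intro n m d hm hn
    obtain ⟨N, rfl⟩ : ∃ N, n = N + 2 := ⟨n - 2, by omega⟩
    subst hm
    have h1 : d + 0 + 1 - d = 1 := by omega
    rw [h1]
    simp only [Finset.sum_range_one]
    have e1 : (N + 2 - 2 * 0 - 2).choose (d + 0 + 1 - 0) = N.choose (d + 1) := by
      congr 1 <;> omega
    have e2 : (N + 2 - 2 * 0 - 1).choose (d + 0 + 1 + 2 - 0) = (N + 1).choose (d + 3) := by
      congr 1 <;> omega
    have e3 : (N + 2 + 2 * d - 2 * (d + 0 + 1)).choose (d + 2) = N.choose (d + 2) := by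
      congr 1; omega
    have e4 : (N + 2).choose (d + 0 + 1 + 2) = (N + 2).choose (d + 3) := by
      congr 1
    rw [e1, e2, e3, e4]
    have p1 : (N + 2).choose (d + 3) = (N + 1).choose (d + 2) + (N + 1).choose (d + 3) :=
      Nat.choose_succ_succ (N + 1) (d + 2)
    have p2 : (N + 1).choose (d + 2) = N.choose (d + 1) + N.choose (d + 2) :=
      Nat.choose_succ_succ N (d + 1)
    omega
  | succ k ih =>
    intro n m d hm hn
    obtain ⟨N, rfl⟩ : ∃ N, n = N + 2 := ⟨n - 2, by omega⟩
    have h1 : m - d = (k + 1) + 1 := by omega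
    rw [h1]
    have hIH := ih N (m - 1) d (by omega) (by omega)
    have h2 : m - 1 - d = k + 1 := by omega
    rw [h2] at hIH
    have split1 : ∑ j ∈ Finset.range (k + 1 + 1), (N + 2 - 2 * j - 2).choose (m - j)
        = ∑ j ∈ Finset.range (k + 1), (N - 2 * j - 2).choose (m - 1 - j) + N.choose m := by
      rw [Finset.sum_range_succ']
      congr 1
      exact Finset.sum_congr rfl fun j _ => by congr 1 <;> omega
    have split2 : ∑ j ∈ Finset.range (k + 1 + 1), (N + 2 - 2 * j - 1).choose (m + 2 - j)
        = ∑ j ∈ Finset.range (k + 1), (N - 2 * j - 1).choose (m + 1 - j)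
          + (N + 1).choose (m + 2) := by
      rw [Finset.sum_range_succ']
      congr 1
      exact Finset.sum_congr rfl fun j _ => by congr 1 <;> omega
    have hfin : (N + 2 + 2 * d - 2 * m).choose (d + 2)
        = (N + 2 * d - 2 * (m - 1)).choose (d + 2) := by
      congr 1; omega
    rw [split1, split2, hfin]
    rw [show m - 1 + 2 = m + 1 by omega] at hIH
    have p1 : (N + 2).choose (m + 2) = (N + 1).choose (m + 1) + (N + 1).choose (m + 2) :=
      Nat.choose_succ_succ (N + 1) (m + 1)
    have p2 : (N + 1).choose (m + 1) = N.choose m + N.choose (m + 1) :=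
      Nat.choose_succ_succ N m
    omega

/-- For a positive integer `n`, `1 ≤ m ≤ n/2` and `0 ≤ d ≤ m-1`:
`∑_{j=0}^{m-d-1} C(n-2j-2, m-j) + ∑_{j=0}^{m-d-1} C(n-2j-1, m+2-j)
  + C(n-2m+2d, d+2) = C(n, m+2)`. -/
theorem binomial_column_identity (n m d : ℕ) (hn : 1 ≤ n) (hm1 : 1 ≤ m)
    (hm2 : 2 * m ≤ n) (hd : d ≤ m - 1) :
    ∑ j ∈ Finset.range (m - d), (n - 2 * j - 2).choose (m - j) +
      ∑ j ∈ Finset.range (m - d), (n - 2 * j - 1).choose (m + 2 - j) +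
      (n + 2 * d - 2 * m).choose (d + 2) = n.choose (m + 2) := by
  exact binom_col_aux (m - d - 1) n m d (by omega) hm2
end

section
/- Let m ≥ 1 and n ≥ 2m+2 be integers, and set f = Σ_{j=0}^{m−1} C(n−2j−2, m−j). Define Q_0 to be the collection of all m-element subsets of [n−2], and for j = 1, 2, …, m define Q_j = {A ∪ {n−1, n−3, …, n−2j+1} : A an (m−j)-element subset of [n−2j−2]}, R_j = {Q ∪ {n−2j+2} : Q ∈ Q_{j−1}}, and S_j = {R ∪ {n−2j+1} : R ∈ R_j}. Let Q = ∪_{j=0}^{m} Q_j, R = ∪_{j=1}^{m} R_j, and S = ∪_{j=1}^{m} S_j. Then every member of Q has size m, every member of R has size m+1, every member of S has size m+2, |Q| = f+1, |R| = f, |S| = f, and Q ∪ R ∪ S is a cutset in 2^{[n]}. -/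
open Finset

lemma aux_cardT {n m : ℕ} (hn : 2*m+2 ≤ n) {j : ℕ} (hj : j ≤ m+1) :
    ((Finset.range j).image fun t => n - (2*t+1)).card = j := by
  rw [Finset.card_image_of_injOn, Finset.card_range]
  intro s hs t ht hst
  simp only [Finset.coe_range, Set.mem_Iio] at hs ht
  dsimp only at hst
  omega

lemma aux_Q {n m : ℕ} (hm : 1 ≤ m) (hn : 2*m+2 ≤ n) (Q : ℕ → Finset (Finset ℕ))
    (hQ0 : Q 0 = Finset.powersetCard m (Finset.Icc 1 (n - 2)))
    (hQ : ∀ j, 1 ≤ j → j ≤ m → Q j =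
      (Finset.powersetCard (m - j) (Finset.Icc 1 (n - 2 * j - 2))).image
        (fun A => A ∪ (Finset.range j).image fun t => n - (2 * t + 1)))
    {j : ℕ} (hj : j ≤ m) (X : Finset ℕ) :
    X ∈ Q j ↔ X ⊆ Finset.Icc 1 n ∧ X.card = m ∧ (∀ t, t < j → n - (2*t+1) ∈ X) ∧
      (∀ t, t ≤ j → n - 2*t ∉ X) ∧ n - (2*j+1) ∉ X := by
  rcases Nat.eq_zero_or_pos j with rfl | hj1
  · rw [hQ0, Finset.mem_powersetCard]
    constructor
    · rintro ⟨hsub, hcard⟩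
      refine ⟨fun x hx => ?_, hcard, by omega, ?_, ?_⟩
      · have := hsub hx; rw [Finset.mem_Icc] at this ⊢; omega
      · intro t ht hmem
        have := hsub hmem; rw [Finset.mem_Icc] at this; omega
      · intro hmem
        have := hsub hmem; rw [Finset.mem_Icc] at this; omega
    · rintro ⟨hsub, hcard, -, ha, hb⟩
      refine ⟨fun x hx => ?_, hcard⟩
      have h1 := hsub hx; rw [Finset.mem_Icc] at h1 ⊢
      have h2 : x ≠ n - 2*0 := fun h => ha 0 le_rfl (h ▸ hx)
      have h3 : x ≠ n - (2*0+1) := fun h => hb (h ▸ hx)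
      omega
  · rw [hQ j hj1 hj]
    constructor
    · rw [Finset.mem_image]
      rintro ⟨A, hA, rfl⟩
      rw [Finset.mem_powersetCard] at hA
      obtain ⟨hAsub, hAcard⟩ := hA
      have hAle : ∀ x ∈ A, 1 ≤ x ∧ x ≤ n - 2*j - 2 := fun x hx => by
        have := hAsub hx; rw [Finset.mem_Icc] at this; exact this
      have hTmem : ∀ x, x ∈ (Finset.range j).image (fun t => n - (2*t+1)) ↔
          ∃ t, t < j ∧ x = n - (2*t+1) := by
        intro x; simp only [Finset.mem_image, Finset.mem_range]
        constructor
        · rintro ⟨t, ht, rfl⟩; exact ⟨t, ht, rfl⟩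
        · rintro ⟨t, ht, rfl⟩; exact ⟨t, ht, rfl⟩
      have hdisj : Disjoint A ((Finset.range j).image (fun t => n - (2*t+1))) := by
        rw [Finset.disjoint_left]
        intro x hx hx'
        obtain ⟨t, ht, rfl⟩ := (hTmem _).1 hx'
        have := hAle _ hx; omega
      refine ⟨?_, ?_, ?_, ?_, ?_⟩
      · intro x hx
        rw [Finset.mem_union] at hx
        rw [Finset.mem_Icc]
        rcases hx with hx | hx
        · have := hAle _ hx; omega
        · obtain ⟨t, ht, rfl⟩ := (hTmem _).1 hx; omega
      · rw [Finset.card_union_of_disjoint hdisj, hAcard, aux_cardT hn (by omega)]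
        omega
      · intro t ht
        rw [Finset.mem_union]; right
        exact (hTmem _).2 ⟨t, ht, rfl⟩
      · intro t ht hmem
        rw [Finset.mem_union] at hmem
        rcases hmem with h | h
        · have := hAle _ h; omega
        · obtain ⟨s, hs, hseq⟩ := (hTmem _).1 h; omega
      · intro hmem
        rw [Finset.mem_union] at hmem
        rcases hmem with h | h
        · have := hAle _ h; omega
        · obtain ⟨s, hs, hseq⟩ := (hTmem _).1 h; omega
    · rintro ⟨hsub, hcard, hb, ha, hbj⟩
      rw [Finset.mem_image]
      refine ⟨X.filter (· ≤ n - 2*j - 2), ?_, ?_⟩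
      · rw [Finset.mem_powersetCard]
        constructor
        · intro x hx
          rw [Finset.mem_filter] at hx
          have := hsub hx.1; rw [Finset.mem_Icc] at this ⊢
          exact ⟨this.1, hx.2⟩
        · -- card
          have hXeq : X.filter (· ≤ n - 2*j - 2) ∪
              (Finset.range j).image (fun t => n - (2*t+1)) = X := by
            ext x
            simp only [Finset.mem_union, Finset.mem_filter, Finset.mem_image,
              Finset.mem_range]
            constructor
            · rintro (⟨hx, -⟩ | ⟨t, ht, rfl⟩)
              · exact hx
              · exact hb t ht
            · intro hx
              by_cases hle : x ≤ n - 2*j - 2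
              · exact Or.inl ⟨hx, hle⟩
              · have hx1 := hsub hx; rw [Finset.mem_Icc] at hx1
                rcases Nat.even_or_odd (n - x) with ⟨t, htt⟩ | ⟨t, htt⟩
                · exfalso
                  have hxe : x = n - 2*t ∧ t ≤ j := by omega
                  exact ha t hxe.2 (hxe.1 ▸ hx)
                · have hxt : x = n - (2*t+1) ∧ t ≤ j := by omega
                  rcases Nat.lt_or_ge t j with h | h
                  · exact Or.inr ⟨t, h, hxt.1.symm⟩
                  · have ht2 : t = j := by omega
                    exact absurd hx (by rw [hxt.1, ht2]; exact hbj)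
          have hdisj : Disjoint (X.filter (· ≤ n - 2*j - 2))
              ((Finset.range j).image (fun t => n - (2*t+1))) := by
            rw [Finset.disjoint_left]
            intro x hx hx'
            rw [Finset.mem_filter] at hx
            simp only [Finset.mem_image, Finset.mem_range] at hx'
            obtain ⟨t, ht, rfl⟩ := hx'
            omega
          have := congrArg Finset.card hXeq
          rw [Finset.card_union_of_disjoint hdisj, aux_cardT hn (by omega), hcard] at this
          omega
      · -- union eq
        ext x
        simp only [Finset.mem_union, Finset.mem_filter, Finset.mem_image, Finset.mem_range]
        constructor
        · rintro (⟨hx, -⟩ | ⟨t, ht, rfl⟩)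
          · exact hx
          · exact hb t ht
        · intro hx
          by_cases hle : x ≤ n - 2*j - 2
          · exact Or.inl ⟨hx, hle⟩
          · have hx1 := hsub hx; rw [Finset.mem_Icc] at hx1
            rcases Nat.even_or_odd (n - x) with ⟨t, htt⟩ | ⟨t, htt⟩
            · exfalso
              have hxe : x = n - 2*t ∧ t ≤ j := by omega
              exact ha t hxe.2 (hxe.1 ▸ hx)
            · have hxt : x = n - (2*t+1) ∧ t ≤ j := by omega
              rcases Nat.lt_or_ge t j with h | h
              · exact Or.inr ⟨t, h, hxt.1.symm⟩
              · have ht2 : t = j := by omega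
                exact absurd hx (by rw [hxt.1, ht2]; exact hbj)

lemma aux_R {n m : ℕ} (hm : 1 ≤ m) (hn : 2*m+2 ≤ n) (Q R : ℕ → Finset (Finset ℕ))
    (hQ0 : Q 0 = Finset.powersetCard m (Finset.Icc 1 (n - 2)))
    (hQ : ∀ j, 1 ≤ j → j ≤ m → Q j =
      (Finset.powersetCard (m - j) (Finset.Icc 1 (n - 2 * j - 2))).image
        (fun A => A ∪ (Finset.range j).image fun t => n - (2 * t + 1)))
    (hR : ∀ j, 1 ≤ j → j ≤ m → R j = (Q (j - 1)).image (insert (n + 2 - 2 * j)))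
    {j : ℕ} (hj1 : 1 ≤ j) (hj : j ≤ m) (X : Finset ℕ) :
    X ∈ R j ↔ X ⊆ Finset.Icc 1 n ∧ X.card = m + 1 ∧ (∀ t, t < j - 1 → n - (2*t+1) ∈ X) ∧
      (∀ t, t < j - 1 → n - 2*t ∉ X) ∧ n - 2*(j-1) ∈ X ∧ n - (2*(j-1)+1) ∉ X := by
  have hv : n + 2 - 2*j = n - 2*(j-1) := by omega
  rw [hR j hj1 hj, hv, Finset.mem_image]
  constructor
  · rintro ⟨Y, hY, rfl⟩
    rw [aux_Q hm hn Q hQ0 hQ (by omega) Y] at hY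
    obtain ⟨hsub, hcard, hb, ha, hbj⟩ := hY
    have hvY : n - 2*(j-1) ∉ Y := ha (j-1) le_rfl
    refine ⟨?_, ?_, ?_, ?_, ?_, ?_⟩
    · intro x hx
      rw [Finset.mem_insert] at hx
      rcases hx with rfl | hx
      · rw [Finset.mem_Icc]; omega
      · exact hsub hx
    · rw [Finset.card_insert_of_notMem hvY, hcard]
    · intro t ht
      rw [Finset.mem_insert]; right; exact hb t ht
    · intro t ht hmem
      rw [Finset.mem_insert] at hmem
      rcases hmem with h | h
      · omega
      · exact ha t (by omega) h
    · exact Finset.mem_insert_self _ _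
    · intro hmem
      rw [Finset.mem_insert] at hmem
      rcases hmem with h | h
      · omega
      · exact hbj h
  · rintro ⟨hsub, hcard, hb, ha, haj, hbj⟩
    refine ⟨X.erase (n - 2*(j-1)), ?_, Finset.insert_erase haj⟩
    rw [aux_Q hm hn Q hQ0 hQ (by omega) _]
    refine ⟨(Finset.erase_subset _ _).trans hsub, ?_, ?_, ?_, ?_⟩
    · rw [Finset.card_erase_of_mem haj, hcard]; rfl
    · intro t ht
      rw [Finset.mem_erase]
      exact ⟨by omega, hb t ht⟩
    · intro t ht hmem
      rw [Finset.mem_erase] at hmem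
      rcases Nat.lt_or_ge t (j-1) with h | h
      · exact ha t h hmem.2
      · have : t = j - 1 := by omega
        exact hmem.1 (by rw [this])
    · intro hmem
      exact hbj (Finset.mem_of_mem_erase hmem)

lemma aux_S {n m : ℕ} (hm : 1 ≤ m) (hn : 2*m+2 ≤ n) (Q R S : ℕ → Finset (Finset ℕ))
    (hQ0 : Q 0 = Finset.powersetCard m (Finset.Icc 1 (n - 2)))
    (hQ : ∀ j, 1 ≤ j → j ≤ m → Q j =
      (Finset.powersetCard (m - j) (Finset.Icc 1 (n - 2 * j - 2))).image
        (fun A => A ∪ (Finset.range j).image fun t => n - (2 * t + 1)))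
    (hR : ∀ j, 1 ≤ j → j ≤ m → R j = (Q (j - 1)).image (insert (n + 2 - 2 * j)))
    (hS : ∀ j, 1 ≤ j → j ≤ m → S j = (R j).image (insert (n + 1 - 2 * j)))
    {j : ℕ} (hj1 : 1 ≤ j) (hj : j ≤ m) (X : Finset ℕ) :
    X ∈ S j ↔ X ⊆ Finset.Icc 1 n ∧ X.card = m + 2 ∧ (∀ t, t < j - 1 → n - (2*t+1) ∈ X) ∧
      (∀ t, t < j - 1 → n - 2*t ∉ X) ∧ n - 2*(j-1) ∈ X ∧ n - (2*(j-1)+1) ∈ X := by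
  have hv : n + 1 - 2*j = n - (2*(j-1)+1) := by omega
  rw [hS j hj1 hj, hv, Finset.mem_image]
  constructor
  · rintro ⟨Y, hY, rfl⟩
    rw [aux_R hm hn Q R hQ0 hQ hR hj1 hj Y] at hY
    obtain ⟨hsub, hcard, hb, ha, haj, hbj⟩ := hY
    refine ⟨?_, ?_, ?_, ?_, ?_, ?_⟩
    · intro x hx
      rw [Finset.mem_insert] at hx
      rcases hx with rfl | hx
      · rw [Finset.mem_Icc]; omega
      · exact hsub hx
    · rw [Finset.card_insert_of_notMem hbj, hcard]
    · intro t ht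
      rw [Finset.mem_insert]; right; exact hb t ht
    · intro t ht hmem
      rw [Finset.mem_insert] at hmem
      rcases hmem with h | h
      · omega
      · exact ha t ht h
    · rw [Finset.mem_insert]; right; exact haj
    · exact Finset.mem_insert_self _ _
  · rintro ⟨hsub, hcard, hb, ha, haj, hbj⟩
    refine ⟨X.erase (n - (2*(j-1)+1)), ?_, Finset.insert_erase hbj⟩
    rw [aux_R hm hn Q R hQ0 hQ hR hj1 hj _]
    refine ⟨(Finset.erase_subset _ _).trans hsub, ?_, ?_, ?_, ?_, ?_⟩
    · rw [Finset.card_erase_of_mem hbj, hcard]; rfl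
    · intro t ht
      rw [Finset.mem_erase]
      exact ⟨by omega, hb t ht⟩
    · intro t ht hmem
      exact ha t ht (Finset.mem_of_mem_erase hmem)
    · rw [Finset.mem_erase]
      exact ⟨by omega, haj⟩
    · exact Finset.notMem_erase _ _

lemma aux_cardQ {n m : ℕ} (hm : 1 ≤ m) (hn : 2*m+2 ≤ n) (Q : ℕ → Finset (Finset ℕ))
    (hQ0 : Q 0 = Finset.powersetCard m (Finset.Icc 1 (n - 2)))
    (hQ : ∀ j, 1 ≤ j → j ≤ m → Q j =
      (Finset.powersetCard (m - j) (Finset.Icc 1 (n - 2 * j - 2))).image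
        (fun A => A ∪ (Finset.range j).image fun t => n - (2 * t + 1)))
    {j : ℕ} (hj : j ≤ m) : (Q j).card = (n - 2*j - 2).choose (m - j) := by
  rcases Nat.eq_zero_or_pos j with rfl | hj1
  · rw [hQ0, Finset.card_powersetCard, Nat.card_Icc]
    congr 1 <;> omega
  · rw [hQ j hj1 hj, Finset.card_image_of_injOn, Finset.card_powersetCard, Nat.card_Icc]
    · congr 1 <;> omega
    · intro A1 h1 A2 h2 h
      rw [Finset.mem_coe, Finset.mem_powersetCard] at h1 h2
      have key : ∀ A : Finset ℕ, A ⊆ Finset.Icc 1 (n - 2*j - 2) → ∀ x ∈ A,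
          x ∉ (Finset.range j).image (fun t => n - (2*t+1)) := by
        intro A hA x hx hmem
        simp only [Finset.mem_image, Finset.mem_range] at hmem
        obtain ⟨t, ht, rfl⟩ := hmem
        have := hA hx; rw [Finset.mem_Icc] at this; omega
      dsimp only at h
      ext x
      constructor
      · intro hx
        have : x ∈ A2 ∪ (Finset.range j).image (fun t => n - (2*t+1)) := by
          rw [← h]; exact Finset.mem_union_left _ hx
        rcases Finset.mem_union.1 this with h' | h'
        · exact h'
        · exact absurd h' (key A1 h1.1 x hx)
      · intro hx
        have : x ∈ A1 ∪ (Finset.range j).image (fun t => n - (2*t+1)) := by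
          rw [h]; exact Finset.mem_union_left _ hx
        rcases Finset.mem_union.1 this with h' | h'
        · exact h'
        · exact absurd h' (key A2 h2.1 x hx)

lemma aux_cardR {n m : ℕ} (hm : 1 ≤ m) (hn : 2*m+2 ≤ n) (Q R : ℕ → Finset (Finset ℕ))
    (hQ0 : Q 0 = Finset.powersetCard m (Finset.Icc 1 (n - 2)))
    (hQ : ∀ j, 1 ≤ j → j ≤ m → Q j =
      (Finset.powersetCard (m - j) (Finset.Icc 1 (n - 2 * j - 2))).image
        (fun A => A ∪ (Finset.range j).image fun t => n - (2 * t + 1)))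
    (hR : ∀ j, 1 ≤ j → j ≤ m → R j = (Q (j - 1)).image (insert (n + 2 - 2 * j)))
    {j : ℕ} (hj1 : 1 ≤ j) (hj : j ≤ m) : (R j).card = (Q (j-1)).card := by
  rw [hR j hj1 hj, Finset.card_image_of_injOn]
  intro A1 h1 A2 h2 h
  rw [Finset.mem_coe, aux_Q hm hn Q hQ0 hQ (by omega) _] at h1 h2
  have hv1 : n + 2 - 2*j ∉ A1 := by
    have := h1.2.2.2.1 (j-1) le_rfl
    have he : n + 2 - 2*j = n - 2*(j-1) := by omega
    rw [he]; exact this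
  have hv2 : n + 2 - 2*j ∉ A2 := by
    have := h2.2.2.2.1 (j-1) le_rfl
    have he : n + 2 - 2*j = n - 2*(j-1) := by omega
    rw [he]; exact this
  have := congrArg (fun s => Finset.erase s (n + 2 - 2*j)) h
  simpa [Finset.erase_insert hv1, Finset.erase_insert hv2] using this

lemma aux_cardS {n m : ℕ} (hm : 1 ≤ m) (hn : 2*m+2 ≤ n) (Q R S : ℕ → Finset (Finset ℕ))
    (hQ0 : Q 0 = Finset.powersetCard m (Finset.Icc 1 (n - 2)))
    (hQ : ∀ j, 1 ≤ j → j ≤ m → Q j =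
      (Finset.powersetCard (m - j) (Finset.Icc 1 (n - 2 * j - 2))).image
        (fun A => A ∪ (Finset.range j).image fun t => n - (2 * t + 1)))
    (hR : ∀ j, 1 ≤ j → j ≤ m → R j = (Q (j - 1)).image (insert (n + 2 - 2 * j)))
    (hS : ∀ j, 1 ≤ j → j ≤ m → S j = (R j).image (insert (n + 1 - 2 * j)))
    {j : ℕ} (hj1 : 1 ≤ j) (hj : j ≤ m) : (S j).card = (R j).card := by
  rw [hS j hj1 hj, Finset.card_image_of_injOn]
  intro A1 h1 A2 h2 h
  rw [Finset.mem_coe, aux_R hm hn Q R hQ0 hQ hR hj1 hj _] at h1 h2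
  have he : n + 1 - 2*j = n - (2*(j-1)+1) := by omega
  have hv1 : n + 1 - 2*j ∉ A1 := by rw [he]; exact h1.2.2.2.2.2
  have hv2 : n + 1 - 2*j ∉ A2 := by rw [he]; exact h2.2.2.2.2.2
  have := congrArg (fun s => Finset.erase s (n + 1 - 2*j)) h
  simpa [Finset.erase_insert hv1, Finset.erase_insert hv2] using this

/-- The explicit three-level cutset construction: with
`f = ∑_{j=0}^{m-1} C(n-2j-2, m-j)`, `Q_0 = binom([n-2], m)`,
`Q_j = {A ∪ {n-1, n-3, …, n-2j+1} : A ∈ binom([n-2j-2], m-j)}`,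
`R_j = {Q ∪ {n-2j+2} : Q ∈ Q_{j-1}}`, `S_j = {R ∪ {n-2j+1} : R ∈ R_j}`,
the collections `Q = ∪_{j=0}^m Q_j`, `R = ∪_{j=1}^m R_j`, `S = ∪_{j=1}^m S_j`
consist of sets of sizes `m`, `m+1`, `m+2` respectively, have cardinalities
`f+1`, `f`, `f`, and `Q ∪ R ∪ S` is a cutset in `2^{[n]}`. -/
theorem three_level_cutset (n m : ℕ) (hm : 1 ≤ m) (hn : 2 * m + 2 ≤ n)
    (f : ℕ) (hf : f = ∑ j ∈ Finset.range m, (n - 2 * j - 2).choose (m - j))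
    (Q R S : ℕ → Finset (Finset ℕ))
    (hQ0 : Q 0 = Finset.powersetCard m (Finset.Icc 1 (n - 2)))
    (hQ : ∀ j, 1 ≤ j → j ≤ m → Q j =
      (Finset.powersetCard (m - j) (Finset.Icc 1 (n - 2 * j - 2))).image
        (fun A => A ∪ (Finset.range j).image fun t => n - (2 * t + 1)))
    (hR : ∀ j, 1 ≤ j → j ≤ m → R j = (Q (j - 1)).image (insert (n + 2 - 2 * j)))
    (hS : ∀ j, 1 ≤ j → j ≤ m → S j = (R j).image (insert (n + 1 - 2 * j)))
    (𝒬 ℛ 𝒮 : Finset (Finset ℕ))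
    (h𝒬 : 𝒬 = (Finset.range (m + 1)).biUnion Q)
    (hℛ : ℛ = (Finset.Icc 1 m).biUnion R)
    (h𝒮 : 𝒮 = (Finset.Icc 1 m).biUnion S) :
    (∀ A ∈ 𝒬, A.card = m) ∧ (∀ A ∈ ℛ, A.card = m + 1) ∧ (∀ A ∈ 𝒮, A.card = m + 2) ∧
    𝒬.card = f + 1 ∧ ℛ.card = f ∧ 𝒮.card = f ∧
    IsCutsetIn n (𝒬 ∪ ℛ ∪ 𝒮) := by
  subst h𝒬 hℛ h𝒮
  have hQiff := fun {j} (hj : j ≤ m) (X : Finset ℕ) => aux_Q hm hn Q hQ0 hQ hj X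
  have hRiff := fun {j} (hj1 : 1 ≤ j) (hj : j ≤ m) (X : Finset ℕ) =>
    aux_R hm hn Q R hQ0 hQ hR hj1 hj X
  have hSiff := fun {j} (hj1 : 1 ≤ j) (hj : j ≤ m) (X : Finset ℕ) =>
    aux_S hm hn Q R S hQ0 hQ hR hS hj1 hj X
  -- disjointness
  have hQd : ∀ j ∈ Finset.range (m+1), ∀ j' ∈ Finset.range (m+1), j ≠ j' →
      Disjoint (Q j) (Q j') := by
    have key : ∀ j j', j < j' → j' ≤ m → Disjoint (Q j) (Q j') := by
      intro j j' h hj'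
      rw [Finset.disjoint_left]
      intro X hX hX'
      have h1 := (hQiff (by omega) X).1 hX
      have h2 := (hQiff hj' X).1 hX'
      exact h1.2.2.2.2 (h2.2.2.1 j h)
    intro j hj j' hj' hne
    rw [Finset.mem_range] at hj hj'
    rcases lt_or_gt_of_ne hne with h | h
    · exact key j j' h (by omega)
    · exact (key j' j h (by omega)).symm
  have hRd : ∀ j ∈ Finset.Icc 1 m, ∀ j' ∈ Finset.Icc 1 m, j ≠ j' →
      Disjoint (R j) (R j') := by
    have key : ∀ j j', 1 ≤ j → j < j' → j' ≤ m → Disjoint (R j) (R j') := by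
      intro j j' hj1 h hj'
      rw [Finset.disjoint_left]
      intro X hX hX'
      have h1 := (hRiff hj1 (by omega) X).1 hX
      have h2 := (hRiff (by omega) hj' X).1 hX'
      exact h2.2.2.2.1 (j-1) (by omega) h1.2.2.2.2.1
    intro j hj j' hj' hne
    rw [Finset.mem_Icc] at hj hj'
    rcases lt_or_gt_of_ne hne with h | h
    · exact key j j' (by omega) h (by omega)
    · exact (key j' j (by omega) h (by omega)).symm
  have hSd : ∀ j ∈ Finset.Icc 1 m, ∀ j' ∈ Finset.Icc 1 m, j ≠ j' →
      Disjoint (S j) (S j') := by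
    have key : ∀ j j', 1 ≤ j → j < j' → j' ≤ m → Disjoint (S j) (S j') := by
      intro j j' hj1 h hj'
      rw [Finset.disjoint_left]
      intro X hX hX'
      have h1 := (hSiff hj1 (by omega) X).1 hX
      have h2 := (hSiff (by omega) hj' X).1 hX'
      exact h2.2.2.2.1 (j-1) (by omega) h1.2.2.2.2.1
    intro j hj j' hj' hne
    rw [Finset.mem_Icc] at hj hj'
    rcases lt_or_gt_of_ne hne with h | h
    · exact key j j' (by omega) h (by omega)
    · exact (key j' j (by omega) h (by omega)).symm
  refine ⟨?_, ?_, ?_, ?_, ?_, ?_, ?_, ?_⟩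
  · -- sizes Q
    intro A hA
    rw [Finset.mem_biUnion] at hA
    obtain ⟨j, hj, hAj⟩ := hA
    rw [Finset.mem_range] at hj
    exact ((hQiff (by omega) A).1 hAj).2.1
  · intro A hA
    rw [Finset.mem_biUnion] at hA
    obtain ⟨j, hj, hAj⟩ := hA
    rw [Finset.mem_Icc] at hj
    exact ((hRiff hj.1 hj.2 A).1 hAj).2.1
  · intro A hA
    rw [Finset.mem_biUnion] at hA
    obtain ⟨j, hj, hAj⟩ := hA
    rw [Finset.mem_Icc] at hj
    exact ((hSiff hj.1 hj.2 A).1 hAj).2.1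
  · -- card Q
    rw [Finset.card_biUnion hQd]
    rw [Finset.sum_congr rfl (fun j hj => aux_cardQ hm hn Q hQ0 hQ
      (by rw [Finset.mem_range] at hj; omega))]
    rw [Finset.sum_range_succ, hf]
    simp [Nat.sub_self]
  · -- card R
    rw [Finset.card_biUnion hRd, hf]
    refine Finset.sum_nbij' (fun j => j - 1) (fun t => t + 1) ?_ ?_ ?_ ?_ ?_
    · intro a ha; rw [Finset.mem_Icc] at ha; rw [Finset.mem_range]; omega
    · intro a ha; rw [Finset.mem_range] at ha; rw [Finset.mem_Icc]; omega
    · intro a ha; rw [Finset.mem_Icc] at ha; omega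
    · intro a ha; rw [Finset.mem_range] at ha; omega
    · intro a ha; rw [Finset.mem_Icc] at ha
      rw [aux_cardR hm hn Q R hQ0 hQ hR ha.1 ha.2,
        aux_cardQ hm hn Q hQ0 hQ (show a - 1 ≤ m by omega)]
  · -- card S
    rw [Finset.card_biUnion hSd, hf]
    refine Finset.sum_nbij' (fun j => j - 1) (fun t => t + 1) ?_ ?_ ?_ ?_ ?_
    · intro a ha; rw [Finset.mem_Icc] at ha; rw [Finset.mem_range]; omega
    · intro a ha; rw [Finset.mem_range] at ha; rw [Finset.mem_Icc]; omega
    · intro a ha; rw [Finset.mem_Icc] at ha; omega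
    · intro a ha; rw [Finset.mem_range] at ha; omega
    · intro a ha; rw [Finset.mem_Icc] at ha
      rw [aux_cardS hm hn Q R S hQ0 hQ hR hS ha.1 ha.2,
        aux_cardR hm hn Q R hQ0 hQ hR ha.1 ha.2,
        aux_cardQ hm hn Q hQ0 hQ (show a - 1 ≤ m by omega)]
  · -- cutset, first component
    intro A hA
    rw [Finset.mem_union] at hA
    rcases hA with hA | hA
    · rw [Finset.mem_union] at hA
      rcases hA with hA | hA
      · rw [Finset.mem_biUnion] at hA
        obtain ⟨j, hj, hAj⟩ := hA
        rw [Finset.mem_range] at hj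
        exact ((hQiff (by omega) A).1 hAj).1
      · rw [Finset.mem_biUnion] at hA
        obtain ⟨j, hj, hAj⟩ := hA
        rw [Finset.mem_Icc] at hj
        exact ((hRiff hj.1 hj.2 A).1 hAj).1
    · rw [Finset.mem_biUnion] at hA
      obtain ⟨j, hj, hAj⟩ := hA
      rw [Finset.mem_Icc] at hj
      exact ((hSiff hj.1 hj.2 A).1 hAj).1
  · -- cutset, chain condition
    intro c hc
    obtain ⟨hc1, hc2, hc3⟩ := hc
    have mono : ∀ i k, i ≤ k → k ≤ n → c i ⊆ c k := by
      intro i k hik hkn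
      induction k with
      | zero =>
        have : i = 0 := by omega
        subst this; exact subset_rfl
      | succ k ih =>
        rcases Nat.lt_or_ge i (k+1) with h | h
        · exact (ih (by omega) (by omega)).trans (hc2 k (by omega))
        · have : i = k + 1 := by omega
          subst this; exact subset_rfl
    have hBsub : c m ⊆ Finset.Icc 1 n := by
      rw [← hc3]; exact mono m n (by omega) le_rfl
    have hCsub : c (m+1) ⊆ Finset.Icc 1 n := by
      rw [← hc3]; exact mono (m+1) n (by omega) le_rfl
    have hDsub : c (m+2) ⊆ Finset.Icc 1 n := by
      rw [← hc3]; exact mono (m+2) n (by omega) le_rfl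
    have hBC : c m ⊆ c (m+1) := mono m (m+1) (by omega) (by omega)
    have hCD : c (m+1) ⊆ c (m+2) := mono (m+1) (m+2) (by omega) (by omega)
    have hBcard : (c m).card = m := hc1 m (by omega)
    have hCcard : (c (m+1)).card = m + 1 := hc1 (m+1) (by omega)
    have hDcard : (c (m+2)).card = m + 2 := hc1 (m+2) (by omega)
    -- existence of a break index
    have hex : ∃ t, t ≤ m ∧ (n - 2*t ∈ c m ∨ n - (2*t+1) ∉ c m) := by
      by_contra hcon
      push_neg at hcon
      have hsub : ((Finset.range (m+1)).image fun t => n - (2*t+1)) ⊆ c m := by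
        intro x hx
        simp only [Finset.mem_image, Finset.mem_range] at hx
        obtain ⟨t, ht, rfl⟩ := hx
        exact (hcon t (by omega)).2
      have := Finset.card_le_card hsub
      rw [aux_cardT hn le_rfl, hBcard] at this
      omega
    classical
    set i := Nat.find hex with hi_def
    obtain ⟨him, hPi⟩ := Nat.find_spec hex
    have hmin : ∀ t, t < i → n - 2*t ∉ c m ∧ n - (2*t+1) ∈ c m := by
      intro t ht
      have := Nat.find_min hex ht
      push_neg at this
      have htm : t ≤ m := by omega
      obtain ⟨h1, h2⟩ := this htm
      exact ⟨h1, h2⟩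
    by_cases hai : n - 2*i ∈ c m
    · -- i < m
      have hilt : i < m := by
        have hins : insert (n - 2*i) ((Finset.range i).image fun t => n - (2*t+1)) ⊆ c m := by
          rw [Finset.insert_subset_iff]
          refine ⟨hai, fun x hx => ?_⟩
          simp only [Finset.mem_image, Finset.mem_range] at hx
          obtain ⟨t, ht, rfl⟩ := hx
          exact (hmin t ht).2
        have hnotmem : n - 2*i ∉ ((Finset.range i).image fun t => n - (2*t+1)) := by
          intro h
          simp only [Finset.mem_image, Finset.mem_range] at h
          obtain ⟨t, ht, hteq⟩ := h
          omega
        have := Finset.card_le_card hins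
        rw [Finset.card_insert_of_notMem hnotmem, aux_cardT hn (by omega), hBcard] at this
        omega
      by_cases hCc : n - (2*i+1) ∉ c (m+1) ∧ ∀ t, t < i → n - 2*t ∉ c (m+1)
      · -- c (m+1) ∈ R (i+1)
        refine ⟨m+1, by omega, ?_⟩
        rw [Finset.mem_union]
        left
        rw [Finset.mem_union]
        right
        rw [Finset.mem_biUnion]
        refine ⟨i+1, by rw [Finset.mem_Icc]; omega, ?_⟩
        rw [hRiff (by omega) (by omega) _]
        have hs : i + 1 - 1 = i := by omega
        rw [hs]
        exact ⟨hCsub, hCcard, fun t ht => hBC (hmin t ht).2, hCc.2, hBC hai, hCc.1⟩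
      · -- c (m+2) ∈ S (k+1)
        have hexk : ∃ t, n - 2*t ∈ c (m+2) := ⟨i, hCD (hBC hai)⟩
        set k := Nat.find hexk with hk_def
        have hak : n - 2*k ∈ c (m+2) := Nat.find_spec hexk
        have hkmin : ∀ t, t < k → n - 2*t ∉ c (m+2) := fun t ht => Nat.find_min hexk ht
        have hki : k ≤ i := Nat.find_min' hexk (hCD (hBC hai))
        have hbk : n - (2*k+1) ∈ c (m+2) := by
          rcases Nat.lt_or_ge k i with h | h
          · exact hCD (hBC (hmin k h).2)
          · have hkeq : k = i := by omega
            rcases Classical.em (n - (2*i+1) ∈ c (m+1)) with hmem | hmem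
            · rw [hkeq]; exact hCD hmem
            · exfalso
              apply hCc
              refine ⟨hmem, fun t ht hmem' => ?_⟩
              exact hkmin t (by omega) (hCD hmem')
        refine ⟨m+2, by omega, ?_⟩
        rw [Finset.mem_union]
        right
        rw [Finset.mem_biUnion]
        refine ⟨k+1, by rw [Finset.mem_Icc]; omega, ?_⟩
        rw [hSiff (by omega) (by omega) _]
        have hs : k + 1 - 1 = k := by omega
        rw [hs]
        exact ⟨hDsub, hDcard, fun t ht => hCD (hBC (hmin t (by omega)).2),
          fun t ht => hkmin t (by omega), hak, hbk⟩
    · -- c m ∈ Q i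
      have hbi : n - (2*i+1) ∉ c m := by tauto
      refine ⟨m, by omega, ?_⟩
      rw [Finset.mem_union]
      left
      rw [Finset.mem_union]
      left
      rw [Finset.mem_biUnion]
      refine ⟨i, by rw [Finset.mem_range]; omega, ?_⟩
      rw [hQiff (by omega) _]
      refine ⟨hBsub, hBcard, fun t ht => (hmin t ht).2, fun t ht => ?_, hbi⟩
      rcases Nat.lt_or_ge t i with h | h
      · exact (hmin t h).1
      · have : t = i := by omega
        subst this; exact hai
end
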